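/- arXiv:2210.17156 — 4 statements merged into one kernel-verified Lean document; each statement's English description precedes it below -/
import Mathlib

section
/- If β < β₀, then the origin is a globally attracting fixed point on [0,1]^n: for every x ∈ [0,1]^n, the sequence of iterates F^k(x) converges to 0 as k → ∞. -/
/-!
On the cube `[0,1]^n` the map `F` is dominated, coordinatewise, by its linearization
`M = (1 - μ) I + β R` at the origin: this is the Weierstrass product inequality
`1 - ∏ (1 - tⱼ) ≤ ∑ tⱼ`. Since `F` preserves the cube and `M` has nonnegative entries,
`0 ≤ Fᵏ x ≤ Mᵏ x`. The matrix `M` is symmetric with spectrum contained in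
`(1 - μ) + β [-ρ(R), ρ(R)] ⊆ (-1, 1)` when `β ρ(R) < μ`, so `Mᵏ → 0` by the spectral theorem.
-/

open Filter Finset

/-- The MMCA map `F`. -/
noncomputable def F {n : ℕ} (R : Matrix (Fin n) (Fin n) ℝ) (β μ : ℝ) (x : Fin n → ℝ) :
    Fin n → ℝ :=
  fun i => 1 - (1 - (1 - μ) * x i) * ∏ j, (1 - β * R i j * x j)

/-- Irreducibility of a (nonnegative) square matrix. -/
def MatIrred {n : ℕ} (R : Matrix (Fin n) (Fin n) ℝ) : Prop :=
  ∀ i j : Fin n, ∃ k : ℕ, 0 < k ∧ (R ^ k) i j ≠ 0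

/-- Spectral radius of a real matrix, as the supremum of the absolute values of the
real spectrum (appropriate here since `R` is symmetric). -/
noncomputable def specRad {n : ℕ} (R : Matrix (Fin n) (Fin n) ℝ) : ℝ :=
  sSup {r : ℝ | ∃ z ∈ spectrum ℝ R, |z| = r}

open Matrix Set Topology

theorem Finset.one_sub_sum_le_prod_one_sub {ι : Type*} (s : Finset ι) {t : ι → ℝ}
    (h0 : ∀ i ∈ s, 0 ≤ t i) (h1 : ∀ i ∈ s, t i ≤ 1) : 1 - ∑ i ∈ s, t i ≤ ∏ i ∈ s, (1 - t i) := by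
  induction s using Finset.cons_induction with
  | empty => simp
  | cons a s _ ih =>
    simp only [Finset.mem_cons, forall_eq_or_imp] at h0 h1
    rw [Finset.prod_cons, Finset.sum_cons]
    have hS : 0 ≤ ∑ i ∈ s, t i := Finset.sum_nonneg h0.2
    nlinarith [ih h0.2 h1.2]

section UnitInterval

variable {ι : Type*} {s : Finset ι} {a : ℝ} {t : ι → ℝ}

theorem prod_one_sub_mem_unitInterval (ht : ∀ i ∈ s, t i ∈ unitInterval) :
    ∏ i ∈ s, (1 - t i) ∈ unitInterval :=
  ⟨Finset.prod_nonneg fun i hi => sub_nonneg.2 (ht i hi).2,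
    Finset.prod_le_one (fun i hi => sub_nonneg.2 (ht i hi).2)
      fun i hi => sub_le_self _ (ht i hi).1⟩

theorem one_sub_mul_prod_one_sub_mem_unitInterval (ha : a ∈ unitInterval)
    (ht : ∀ i ∈ s, t i ∈ unitInterval) :
    1 - (1 - a) * ∏ i ∈ s, (1 - t i) ∈ unitInterval :=
  Set.Icc.mem_iff_one_sub_mem.1 <|
    unitInterval.mul_mem (Set.Icc.mem_iff_one_sub_mem.1 ha) (prod_one_sub_mem_unitInterval ht)

theorem one_sub_mul_prod_one_sub_le_add_sum (ha : a ∈ unitInterval)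
    (ht : ∀ i ∈ s, t i ∈ unitInterval) :
    1 - (1 - a) * ∏ i ∈ s, (1 - t i) ≤ a + ∑ i ∈ s, t i := by
  have hP := prod_one_sub_mem_unitInterval ht
  have hW := s.one_sub_sum_le_prod_one_sub (fun i hi => (ht i hi).1) fun i hi => (ht i hi).2
  nlinarith [mul_le_of_le_one_right ha.1 hP.2]

end UnitInterval

theorem Matrix.monotone_mulVec_of_nonneg {m ι α : Type*} [Fintype ι] [Semiring α] [PartialOrder α]
    [IsOrderedRing α] {A : Matrix m ι α} (hA : ∀ i j, 0 ≤ A i j) : Monotone (A *ᵥ ·) :=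
  fun _ _ hxy i => Finset.sum_le_sum fun j _ => mul_le_mul_of_nonneg_left (hxy j) (hA i j)

theorem Matrix.IsHermitian.tendsto_pow_atTop_nhds_zero {ι 𝕜 : Type*} [Fintype ι] [DecidableEq ι]
    [RCLike 𝕜] {A : Matrix ι ι 𝕜} (hA : A.IsHermitian) (h : ∀ i, |hA.eigenvalues i| < 1) :
    Tendsto (A ^ ·) atTop (𝓝 0) := by
  set U : Matrix ι ι 𝕜 := (hA.eigenvectorUnitary : Matrix ι ι 𝕜)
  have hpow : ∀ k : ℕ,
      A ^ k = U * diagonal (fun i => (hA.eigenvalues i : 𝕜) ^ k) * star U := by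
    intro k
    calc A ^ k = (Unitary.conjStarAlgAut 𝕜 _ hA.eigenvectorUnitary
            (diagonal (RCLike.ofReal ∘ hA.eigenvalues))) ^ k := by
          rw [← hA.spectral_theorem]
      _ = _ := by rw [← map_pow, diagonal_pow, Unitary.conjStarAlgAut_apply]; rfl
  have hdiag : Tendsto (fun k : ℕ => diagonal fun i => (hA.eigenvalues i : 𝕜) ^ k)
      atTop (𝓝 (diagonal 0)) :=
    (continuous_id.matrix_diagonal.tendsto _).comp <| tendsto_pi_nhds.2 fun i =>
      tendsto_pow_atTop_nhds_zero_of_norm_lt_one (by simpa using h i)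
  simpa [hpow] using
    ((tendsto_const_nhds (x := U)).mul hdiag).mul (tendsto_const_nhds (x := star U))

theorem abs_le_specRad {n : ℕ} {R : Matrix (Fin n) (Fin n) ℝ} {z : ℝ} (hz : z ∈ spectrum ℝ R) :
    |z| ≤ specRad R :=
  le_csSup (R.finite_spectrum.image abs).bddAbove ⟨z, hz, rfl⟩

section Linearization

variable {n : ℕ} {R : Matrix (Fin n) (Fin n) ℝ} {β μ : ℝ}

variable (R β μ) in
/-- The Jacobian of `F R β μ` at the origin. -/
noncomputable def linearization : Matrix (Fin n) (Fin n) ℝ :=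
  algebraMap ℝ _ (1 - μ) + β • R

theorem linearization_mulVec_apply (y : Fin n → ℝ) (i : Fin n) :
    (linearization R β μ *ᵥ y) i = (1 - μ) * y i + ∑ j, β * R i j * y j := by
  rw [linearization, add_mulVec, algebraMap_eq_diagonal, Pi.add_apply, mulVec_diagonal,
    smul_mulVec, Pi.smul_apply, smul_eq_mul, mulVec, dotProduct, Finset.mul_sum]
  simp only [Pi.algebraMap_apply, Algebra.algebraMap_self, RingHom.id_apply, mul_assoc]

theorem linearization_nonneg (hR : ∀ i j, 0 ≤ R i j) (hβ : 0 ≤ β) (hμ : μ ≤ 1) (i j : Fin n) :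
    0 ≤ linearization R β μ i j := by
  have : 0 ≤ (algebraMap ℝ (Matrix (Fin n) (Fin n) ℝ) (1 - μ)) i j := by
    rw [algebraMap_matrix_apply]; split_ifs <;> simp [hμ]
  exact add_nonneg this (mul_nonneg hβ (hR i j))

theorem isHermitian_linearization (hR : R.IsSymm) : (linearization R β μ).IsHermitian := by
  rw [isHermitian_iff_isSymm, linearization, algebraMap_eq_diagonal]
  exact (isSymm_diagonal _).add (hR.smul β)

theorem abs_lt_one_of_mem_spectrum_linearization (hβ : 0 < β) (hμ : μ ≤ 1)
    (hlt : β * specRad R < μ) {z : ℝ} (hz : z ∈ spectrum ℝ (linearization R β μ)) : |z| < 1 := by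
  rw [linearization, ← spectrum.singleton_add_eq] at hz
  obtain ⟨_, rfl, _, hb, rfl⟩ := hz
  rw [show β • R = (Units.mk0 β hβ.ne') • R from rfl, spectrum.unit_smul_eq_smul] at hb
  obtain ⟨ν, hν, rfl⟩ := hb
  calc |1 - μ + Units.mk0 β hβ.ne' • ν| ≤ |1 - μ| + β * |ν| := by
        simpa [abs_mul, abs_of_pos hβ] using abs_add_le (1 - μ) (β * ν)
    _ ≤ (1 - μ) + β * specRad R := by
        gcongr
        · exact abs_of_nonneg (sub_nonneg.2 hμ) |>.le
        · exact abs_le_specRad hν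
    _ < 1 := by linarith

end Linearization

section Dynamics

variable {n : ℕ} {R : Matrix (Fin n) (Fin n) ℝ} {β μ : ℝ}

theorem coupling_mem_unitInterval (hR : ∀ i j, R i j ∈ unitInterval) (hβ : β ∈ unitInterval)
    {y : Fin n → ℝ} (hy : y ∈ Set.Icc 0 1) (i j : Fin n) : β * R i j * y j ∈ unitInterval :=
  unitInterval.mul_mem (unitInterval.mul_mem hβ (hR i j)) ⟨hy.1 j, hy.2 j⟩

theorem recovery_mem_unitInterval (hμ : μ ∈ unitInterval) {y : Fin n → ℝ} (hy : y ∈ Set.Icc 0 1)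
    (i : Fin n) : (1 - μ) * y i ∈ unitInterval :=
  unitInterval.mul_mem (Set.Icc.mem_iff_one_sub_mem.1 hμ) ⟨hy.1 i, hy.2 i⟩

theorem mapsTo_F_Icc (hR : ∀ i j, R i j ∈ unitInterval) (hβ : β ∈ unitInterval)
    (hμ : μ ∈ unitInterval) : MapsTo (F R β μ) (Set.Icc 0 1) (Set.Icc 0 1) := fun _ hy =>
  have h i := one_sub_mul_prod_one_sub_mem_unitInterval (recovery_mem_unitInterval hμ hy i)
    fun j _ => coupling_mem_unitInterval hR hβ hy i j
  ⟨fun i => (h i).1, fun i => (h i).2⟩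

theorem F_le_linearization_mulVec (hR : ∀ i j, R i j ∈ unitInterval) (hβ : β ∈ unitInterval)
    (hμ : μ ∈ unitInterval) {y : Fin n → ℝ} (hy : y ∈ Set.Icc 0 1) :
    F R β μ y ≤ linearization R β μ *ᵥ y := fun i => by
  rw [linearization_mulVec_apply]
  exact one_sub_mul_prod_one_sub_le_add_sum (recovery_mem_unitInterval hμ hy i)
    fun j _ => coupling_mem_unitInterval hR hβ hy i j

theorem iterate_F_le_linearization_pow_mulVec (hR : ∀ i j, R i j ∈ unitInterval)
    (hβ : β ∈ unitInterval) (hμ : μ ∈ unitInterval) {x : Fin n → ℝ} (hx : x ∈ Set.Icc 0 1) (k : ℕ) :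
    (F R β μ)^[k] x ≤ linearization R β μ ^ k *ᵥ x := by
  refine Monotone.seq_le_seq (f := (linearization R β μ *ᵥ ·)) (x := ((F R β μ)^[·] x))
    (y := (linearization R β μ ^ · *ᵥ x))
    (monotone_mulVec_of_nonneg (linearization_nonneg (fun i j => (hR i j).1) hβ.1 hμ.2)) k
    (by simp) (fun k _ => ?_) fun k _ => ?_
  · rw [Function.iterate_succ_apply']
    exact F_le_linearization_mulVec hR hβ hμ ((mapsTo_F_Icc hR hβ hμ).iterate k hx)
  · rw [mulVec_mulVec, pow_succ']

end Dynamics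

theorem origin_global_attractor_general (n : ℕ) (R : Matrix (Fin n) (Fin n) ℝ)
    (hsymm : R.IsSymm) (hR : ∀ i j, R i j ∈ Set.Icc (0:ℝ) 1)
    (β μ : ℝ) (hβ : β ∈ Set.Ioo (0:ℝ) 1) (hμ : μ ∈ Set.Ioo (0:ℝ) 1)
    (hlt : β < μ / specRad R) (x : Fin n → ℝ) (hx : ∀ i, x i ∈ Set.Icc (0:ℝ) 1) :
    Tendsto (fun k => (F R β μ)^[k] x) atTop (nhds 0) := by
  have hx' : x ∈ Set.Icc 0 1 := ⟨fun i => (hx i).1, fun i => (hx i).2⟩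
  have hβ' := Ioo_subset_Icc_self hβ
  have hμ' := Ioo_subset_Icc_self hμ
  have hρ : 0 < specRad R := by
    by_contra! h
    linarith [hβ.1, div_nonpos_of_nonneg_of_nonpos hμ.1.le h]
  have hM := isHermitian_linearization (β := β) (μ := μ) hsymm
  have hpow := hM.tendsto_pow_atTop_nhds_zero fun i =>
    abs_lt_one_of_mem_spectrum_linearization hβ.1 hμ.2.le ((lt_div_iff₀ hρ).1 hlt)
      (hM.eigenvalues_mem_spectrum_real i)
  have hupper : Tendsto (fun k => linearization R β μ ^ k *ᵥ x) atTop (𝓝 0) := by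
    simpa [Function.comp_def] using
      ((continuous_id.matrix_mulVec continuous_const).tendsto 0).comp hpow
  refine tendsto_pi_nhds.2 fun i => tendsto_of_tendsto_of_tendsto_of_le_of_le tendsto_const_nhds
    (tendsto_pi_nhds.1 hupper i) (fun k => ?_) fun k => ?_
  · exact ((mapsTo_F_Icc hR hβ' hμ').iterate k hx').1 i
  · exact iterate_F_le_linearization_pow_mulVec hR hβ' hμ' hx' k i

theorem origin_global_attractor (n : ℕ) (hn : 2 ≤ n) (R : Matrix (Fin n) (Fin n) ℝ)
    (hsymm : R.IsSymm) (hR : ∀ i j, R i j ∈ Set.Icc (0:ℝ) 1)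
    (hdiag : ∀ i, R i i = 0) (hirr : MatIrred R)
    (β μ : ℝ) (hβ : β ∈ Set.Ioo (0:ℝ) 1) (hμ : μ ∈ Set.Ioo (0:ℝ) 1)
    (hlt : β < μ / specRad R) (x : Fin n → ℝ) (hx : ∀ i, x i ∈ Set.Icc (0:ℝ) 1) :
    Tendsto (fun k => (F R β μ)^[k] x) atTop (nhds 0) :=
  origin_global_attractor_general n R hsymm hR β μ hβ hμ hlt x hx
end

section
/- If β > β₀, then F has exactly one fixed point in [0,1]^n \ {0}: there is a unique z₀ ∈ [0,1]^n with z₀ ≠ 0 and F(z₀) = z₀. -/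
open Filter Finset

-- product of (1-c j) in [0,1]
lemma prod_one_sub_mem {ι : Type*} (s : Finset ι) (c : ι → ℝ)
    (h : ∀ j ∈ s, 0 ≤ c j ∧ c j ≤ 1) : 0 ≤ ∏ j ∈ s, (1 - c j) ∧ ∏ j ∈ s, (1 - c j) ≤ 1 := by
  constructor
  · exact Finset.prod_nonneg fun j hj => by linarith [(h j hj).2]
  · exact Finset.prod_le_one (fun j hj => by linarith [(h j hj).2]) (fun j hj => by linarith [(h j hj).1])

-- ∏ (1 - a j) ≤ 1 - S + S^2
lemma prod_one_sub_le {ι : Type*} (s : Finset ι) (a : ι → ℝ)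
    (h : ∀ j ∈ s, 0 ≤ a j ∧ a j ≤ 1) :
    ∏ j ∈ s, (1 - a j) ≤ 1 - (∑ j ∈ s, a j) + (∑ j ∈ s, a j)^2 := by
  classical
  induction s using Finset.induction with
  | empty => simp
  | @insert x s hxs ih =>
    have hx' := h x (Finset.mem_insert_self x s)
    have hs : ∀ j ∈ s, 0 ≤ a j ∧ a j ≤ 1 := fun j hj => h j (Finset.mem_insert_of_mem hj)
    have ih' := ih hs
    have hS : 0 ≤ ∑ j ∈ s, a j := Finset.sum_nonneg fun j hj => (hs j hj).1
    have hP : 0 ≤ ∏ j ∈ s, (1 - a j) := (prod_one_sub_mem s a hs).1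
    rw [Finset.prod_insert hxs, Finset.sum_insert hxs]
    nlinarith [hx'.1, hx'.2, mul_le_mul_of_nonneg_left ih' hx'.1]

-- strict step
lemma strict_step {c t q p : ℝ} (hc : 0 < c) (hc1 : c < 1) (ht : 0 < t) (ht1 : t < 1)
    (hq0 : 0 ≤ q) (hq1 : q < 1) (hp : p ≤ 1 - t + t * q) :
    (1 - t * c) * p < 1 - t + t * ((1 - c) * q) := by
  have h1 : 0 < 1 - t * c := by nlinarith
  have h2 : (1 - t*c)*p ≤ (1-t*c)*(1-t+t*q) := mul_le_mul_of_nonneg_left hp (le_of_lt h1)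
  have h3 : (1-t*c)*(1-t+t*q) = 1-t+t*((1-c)*q) - t*c*(1-q)*(1-t) := by ring
  have h4 : 0 < t*c*(1-q)*(1-t) := mul_pos (mul_pos (mul_pos ht hc) (by linarith)) (by linarith)
  linarith

-- L1: nonstrict sublinearity of products
lemma prod_sublinear {ι : Type*} (s : Finset ι) (c : ι → ℝ) {t : ℝ}
    (h : ∀ j ∈ s, 0 ≤ c j ∧ c j ≤ 1) (ht0 : 0 ≤ t) (ht1 : t ≤ 1) :
    ∏ j ∈ s, (1 - t * c j) ≤ 1 - t + t * ∏ j ∈ s, (1 - c j) := by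
  classical
  induction s using Finset.induction with
  | empty => simp
  | @insert x s hxs ih =>
    have hx := h x (Finset.mem_insert_self x s)
    have hs : ∀ j ∈ s, 0 ≤ c j ∧ c j ≤ 1 := fun j hj => h j (Finset.mem_insert_of_mem hj)
    have ih' := ih hs
    obtain ⟨hq0, hq1⟩ := prod_one_sub_mem s c hs
    rw [Finset.prod_insert hxs, Finset.prod_insert hxs]
    set q := ∏ j ∈ s, (1 - c j)
    have h1 : 0 ≤ 1 - t * c x := by nlinarith [hx.1, hx.2]
    have h2 : (1 - t * c x) * ∏ j ∈ s, (1 - t * c j) ≤ (1 - t*c x)*(1-t+t*q) :=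
      mul_le_mul_of_nonneg_left ih' h1
    have h3 : (1-t*c x)*(1-t+t*q) = 1-t+t*((1-c x)*q) - t*(c x)*(1-q)*(1-t) := by ring
    have h4 : 0 ≤ t*(c x)*(1-q)*(1-t) :=
      mul_nonneg (mul_nonneg (mul_nonneg ht0 hx.1) (by linarith)) (by linarith)
    linarith

section Fbasic
variable {n : ℕ} (R : Matrix (Fin n) (Fin n) ℝ) (β μ : ℝ)
variable (hR : ∀ i j, R i j ∈ Set.Icc (0:ℝ) 1) (hβ : β ∈ Set.Ioo (0:ℝ) 1)
  (hμ : μ ∈ Set.Ioo (0:ℝ) 1)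

lemma brx_mem {b r x : ℝ} (hb0 : 0 ≤ b) (hb1 : b ≤ 1) (hr0 : 0 ≤ r) (hr1 : r ≤ 1)
    (hx0 : 0 ≤ x) (hx1 : x ≤ 1) : 0 ≤ b * r * x ∧ b * r * x ≤ 1 :=
  ⟨by positivity, mul_le_one₀ (mul_le_one₀ hb1 hr0 hr1) hx0 hx1⟩

include hR hβ hμ in
lemma F_mono {x y : Fin n → ℝ} (hx : ∀ i, x i ∈ Set.Icc (0:ℝ) 1)
    (hy : ∀ i, y i ∈ Set.Icc (0:ℝ) 1) (hxy : ∀ i, x i ≤ y i) :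
    ∀ i, F R β μ x i ≤ F R β μ y i := by
  intro i
  unfold F
  have hf : ∀ j, 0 ≤ β * R i j * y j ∧ β * R i j * y j ≤ 1 := fun j =>
    brx_mem hβ.1.le hβ.2.le (hR i j).1 (hR i j).2 (hy j).1 (hy j).2
  have h1 : 0 ≤ 1 - (1 - μ) * y i := by nlinarith [(hy i).1, (hy i).2, hμ.1, hμ.2]
  have h2 : 1 - (1 - μ) * y i ≤ 1 - (1 - μ) * x i := by nlinarith [hxy i, hμ.2]
  have h3 : ∏ j, (1 - β * R i j * y j) ≤ ∏ j, (1 - β * R i j * x j) := by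
    apply Finset.prod_le_prod
    · intro j _; linarith [(hf j).2]
    · intro j _
      have : 0 ≤ β * R i j := mul_nonneg hβ.1.le (hR i j).1
      nlinarith [hxy j]
  have h4 : 0 ≤ ∏ j, (1 - β * R i j * y j) :=
    Finset.prod_nonneg fun j _ => by linarith [(hf j).2]
  nlinarith [mul_le_mul h2 h3 h4 (by linarith : (0:ℝ) ≤ 1 - (1 - μ) * x i)]

include hR hβ hμ in
lemma F_maps {x : Fin n → ℝ} (hx : ∀ i, x i ∈ Set.Icc (0:ℝ) 1) :
    ∀ i, F R β μ x i ∈ Set.Icc (0:ℝ) 1 := by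
  intro i
  unfold F
  have h1 : 0 ≤ 1 - (1 - μ) * x i := by nlinarith [(hx i).1, (hx i).2, hμ.1, hμ.2]
  have h1' : 1 - (1 - μ) * x i ≤ 1 := by nlinarith [(hx i).1, hμ.2]
  obtain ⟨h4, h5⟩ := prod_one_sub_mem Finset.univ (fun j => β * R i j * x j) (fun j _ =>
    brx_mem hβ.1.le hβ.2.le (hR i j).1 (hR i j).2 (hx j).1 (hx j).2)
  refine Set.mem_Icc.mpr ⟨?_, ?_⟩
  · nlinarith [mul_le_one₀ h1' h4 h5]
  · nlinarith [mul_nonneg h1 h4]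

lemma F_cont (i : Fin n) : Continuous (fun x : Fin n → ℝ => F R β μ x i) := by
  unfold F
  fun_prop

end Fbasic

section Iterate
variable {n : ℕ} {R : Matrix (Fin n) (Fin n) ℝ} {β μ : ℝ}
  (hR : ∀ i j, R i j ∈ Set.Icc (0:ℝ) 1) (hβ : β ∈ Set.Ioo (0:ℝ) 1)
  (hμ : μ ∈ Set.Ioo (0:ℝ) 1)

include hR hβ hμ in
lemma exists_fixed_above {x₀ : Fin n → ℝ} (hx₀ : ∀ i, x₀ i ∈ Set.Icc (0:ℝ) 1)
    (hsub : ∀ i, x₀ i ≤ F R β μ x₀ i) :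
    ∃ z : Fin n → ℝ, (∀ i, z i ∈ Set.Icc (0:ℝ) 1) ∧ (∀ i, x₀ i ≤ z i) ∧ F R β μ z = z := by
  set seq : ℕ → (Fin n → ℝ) := fun k => (F R β μ)^[k] x₀ with hseq
  have hmem : ∀ k, ∀ i, seq k i ∈ Set.Icc (0:ℝ) 1 := by
    intro k
    induction k with
    | zero => exact hx₀
    | succ k ih =>
      have : seq (k+1) = F R β μ (seq k) := by
        simp [hseq, Function.iterate_succ_apply']
      rw [this]; exact F_maps R β μ hR hβ hμ ih
  have hstep : ∀ k, seq (k+1) = F R β μ (seq k) := by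
    intro k; simp [hseq, Function.iterate_succ_apply']
  have hmono : ∀ k, ∀ i, seq k i ≤ seq (k+1) i := by
    intro k
    induction k with
    | zero => simpa [hseq] using hsub
    | succ k ih =>
      intro i
      calc seq (k+1) i = F R β μ (seq k) i := congrFun (hstep k) i
        _ ≤ F R β μ (seq (k+1)) i := F_mono R β μ hR hβ hμ (hmem k) (hmem (k+1)) ih i
        _ = seq (k+1+1) i := (congrFun (hstep (k+1)) i).symm
  have hmono' : ∀ i, Monotone (fun k => seq k i) := fun i =>
    monotone_nat_of_le_succ (fun k => hmono k i)
  have hbdd : ∀ i, BddAbove (Set.range fun k => seq k i) := by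
    intro i
    exact ⟨1, by rintro y ⟨k, rfl⟩; exact (hmem k i).2⟩
  set z : Fin n → ℝ := fun i => ⨆ k, seq k i with hz
  have htend : ∀ i, Tendsto (fun k => seq k i) atTop (nhds (z i)) := fun i =>
    tendsto_atTop_ciSup (hmono' i) (hbdd i)
  have hzmem : ∀ i, z i ∈ Set.Icc (0:ℝ) 1 := by
    intro i
    constructor
    · exact le_trans (hmem 0 i).1 (le_ciSup (hbdd i) 0)
    · exact ciSup_le fun k => (hmem k i).2
  have hle : ∀ i, x₀ i ≤ z i := fun i => le_ciSup (hbdd i) 0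
  refine ⟨z, hzmem, hle, ?_⟩
  funext i
  have htend2 : Tendsto (fun k => F R β μ (seq k) i) atTop (nhds (F R β μ z i)) := by
    have hzt : Tendsto seq atTop (nhds z) := tendsto_pi_nhds.mpr htend
    exact ((F_cont R β μ i).continuousAt.tendsto).comp hzt
  have htend3 : Tendsto (fun k => seq (k+1) i) atTop (nhds (z i)) :=
    (htend i).comp (tendsto_add_atTop_nat 1)
  have : (fun k => F R β μ (seq k) i) = fun k => seq (k+1) i := by
    funext k; rw [hstep k]
  rw [this] at htend2
  exact tendsto_nhds_unique htend2 htend3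

end Iterate


section Irred
variable {n : ℕ} {R : Matrix (Fin n) (Fin n) ℝ}

lemma row_ne_zero (hirr : MatIrred R) (i : Fin n) : ∃ l, R i l ≠ 0 := by
  by_contra h
  push_neg at h
  obtain ⟨k, hk, hne⟩ := hirr i i
  apply hne
  obtain ⟨m, rfl⟩ := Nat.exists_eq_add_of_lt hk
  rw [zero_add, pow_succ', Matrix.mul_apply]
  exact Finset.sum_eq_zero fun l _ => by rw [h l, zero_mul]

end Irred

section FixedPos
variable {n : ℕ} {R : Matrix (Fin n) (Fin n) ℝ} {β μ : ℝ}
  (hR : ∀ i j, R i j ∈ Set.Icc (0:ℝ) 1) (hβ : β ∈ Set.Ioo (0:ℝ) 1)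
  (hμ : μ ∈ Set.Ioo (0:ℝ) 1)

include hR hβ in
lemma fixed_zero_prop {z : Fin n → ℝ} (hz : ∀ i, z i ∈ Set.Icc (0:ℝ) 1)
    (hfix : F R β μ z = z) {i : Fin n} (hzi : z i = 0) : ∀ j, R i j * z j = 0 := by
  intro j
  have hFi : F R β μ z i = 0 := by rw [hfix, hzi]
  unfold F at hFi
  rw [hzi, mul_zero, sub_zero, one_mul] at hFi
  have hprod : ∏ l, (1 - β * R i l * z l) = 1 := by linarith
  have hfac : ∀ l, 0 ≤ β * R i l * z l ∧ β * R i l * z l ≤ 1 := fun l =>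
    brx_mem hβ.1.le hβ.2.le (hR i l).1 (hR i l).2 (hz l).1 (hz l).2
  obtain ⟨hPe0, hPe1⟩ := prod_one_sub_mem (Finset.univ.erase j) (fun l => β * R i l * z l)
    (fun l _ => hfac l)
  have hj0 : 0 ≤ 1 - β * R i j * z j := by linarith [(hfac j).2]
  have hsplit : (1 - β * R i j * z j) * ∏ l ∈ Finset.univ.erase j, (1 - β * R i l * z l)
      = ∏ l, (1 - β * R i l * z l) := Finset.mul_prod_erase _ (fun l => 1 - β * R i l * z l) (Finset.mem_univ j)
  have h1 : (1:ℝ) ≤ 1 - β * R i j * z j := by nlinarith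
  have h2 : 0 ≤ R i j * z j := mul_nonneg (hR i j).1 (hz j).1
  nlinarith [hβ.1]

include hR hβ hμ in
lemma fixed_pos (hirr : MatIrred R) {z : Fin n → ℝ} (hz : ∀ i, z i ∈ Set.Icc (0:ℝ) 1)
    (hz0 : z ≠ 0) (hfix : F R β μ z = z) : ∀ i, 0 < z i := by
  intro i
  rcases (hz i).1.lt_or_eq with h | h
  · exact h
  exfalso
  obtain ⟨j, hj⟩ := Function.ne_iff.mp hz0
  have hblock : ∀ k : ℕ, ∀ a b : Fin n, z a = 0 → z b ≠ 0 → (R ^ k) a b = 0 := by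
    intro k
    induction k with
    | zero =>
      intro a b ha hb
      have : a ≠ b := fun h => hb (h ▸ ha)
      simp [Matrix.one_apply_ne this]
    | succ k ih =>
      intro a b ha hb
      rw [pow_succ', Matrix.mul_apply]
      apply Finset.sum_eq_zero
      intro l _
      rcases eq_or_ne (z l) 0 with hl | hl
      · rw [ih l b hl hb, mul_zero]
      · have := fixed_zero_prop hR hβ hz hfix ha l
        have hRal : R a l = 0 := by
          rcases mul_eq_zero.mp this with h' | h'
          · exact h'
          · exact absurd h' hl
        rw [hRal, zero_mul]
  obtain ⟨k, hk, hne⟩ := hirr i j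
  exact hne (hblock k i j h.symm (by simpa using hj))

include hR hβ hμ in
lemma fixed_lt_one {z : Fin n → ℝ} (hz : ∀ i, z i ∈ Set.Icc (0:ℝ) 1)
    (hfix : F R β μ z = z) : ∀ i, z i < 1 := by
  intro i
  have hFi : F R β μ z i = z i := by rw [hfix]
  unfold F at hFi
  have h1 : μ ≤ 1 - (1 - μ) * z i := by nlinarith [(hz i).2, hμ.2]
  have h2 : 0 < ∏ l, (1 - β * R i l * z l) := by
    apply Finset.prod_pos
    intro l _
    have : β * R i l * z l ≤ β := by
      have := mul_le_one₀ (hR i l).2 (hz l).1 (hz l).2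
      nlinarith [hβ.1, mul_nonneg (hR i l).1 (hz l).1]
    linarith [hβ.2]
  nlinarith [hμ.1]

end FixedPos

section Sublinear
variable {n : ℕ} {R : Matrix (Fin n) (Fin n) ℝ} {β μ : ℝ}
  (hR : ∀ i j, R i j ∈ Set.Icc (0:ℝ) 1) (hβ : β ∈ Set.Ioo (0:ℝ) 1)
  (hμ : μ ∈ Set.Ioo (0:ℝ) 1)

include hR hβ hμ in
lemma F_strict_sublinear {z : Fin n → ℝ} (hz : ∀ i, 0 < z i) (hz1 : ∀ i, z i ≤ 1)
    {t : ℝ} (ht0 : 0 < t) (ht1 : t < 1) {i : Fin n} {j₂ : Fin n} (hj₂ : R i j₂ ≠ 0) :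
    t * F R β μ z i < F R β μ (t • z) i := by
  set c₀ : ℝ := (1 - μ) * z i with hc₀
  set c : Fin n → ℝ := fun j => β * R i j * z j with hc
  set q : ℝ := ∏ j, (1 - c j) with hq
  have hcmem : ∀ j, 0 ≤ c j ∧ c j ≤ 1 := fun j =>
    brx_mem hβ.1.le hβ.2.le (hR i j).1 (hR i j).2 (hz j).le (hz1 j)
  obtain ⟨hq0, hq1⟩ := prod_one_sub_mem Finset.univ c (fun j _ => hcmem j)
  have hcj₂ : 0 < c j₂ := by
    have := (hR i j₂).1
    have hRp : 0 < R i j₂ := lt_of_le_of_ne this (Ne.symm hj₂)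
    exact mul_pos (mul_pos hβ.1 hRp) (hz j₂)
  have hqlt : q < 1 := by
    obtain ⟨hPe0, hPe1⟩ := prod_one_sub_mem (Finset.univ.erase j₂) c (fun j _ => hcmem j)
    have hsplit : (1 - c j₂) * ∏ l ∈ Finset.univ.erase j₂, (1 - c l) = q :=
      Finset.mul_prod_erase _ (fun l => 1 - c l) (Finset.mem_univ j₂)
    nlinarith [(hcmem j₂).2]
  have hc₀mem : 0 < c₀ ∧ c₀ < 1 := by
    constructor
    · exact mul_pos (by linarith [hμ.2]) (hz i)
    · nlinarith [hz1 i, hz i, hμ.1, hμ.2]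
  have hp : ∏ j, (1 - t * c j) ≤ 1 - t + t * q :=
    prod_sublinear Finset.univ c (fun j _ => hcmem j) ht0.le ht1.le
  have hstrict := strict_step hc₀mem.1 hc₀mem.2 ht0 ht1 hq0 hqlt hp
  have hFz : F R β μ z i = 1 - (1 - c₀) * q := by
    unfold F; rw [hc₀, hq]
  have hFtz : F R β μ (t • z) i = 1 - (1 - t * c₀) * ∏ j, (1 - t * c j) := by
    unfold F
    have e1 : (1 - (1 - μ) * (t • z) i) = 1 - t * c₀ := by
      simp [hc₀, Pi.smul_apply, smul_eq_mul]; ring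
    have e2 : ∏ j, (1 - β * R i j * (t • z) j) = ∏ j, (1 - t * c j) := by
      apply Finset.prod_congr rfl
      intro j _
      simp [hc, Pi.smul_apply, smul_eq_mul]; ring
    rw [e1, e2]
  rw [hFz, hFtz]
  linarith
end Sublinear

lemma subsol_arith {μ w S c a b : ℝ} (ha0 : 0 ≤ a) (haS : a ≤ S) (hb0 : 0 ≤ b)
    (hbS : b ≤ 1 - S - c) (hc : c = (1 - μ) * w) (hw : 0 ≤ w) (hab : w * μ ≤ a * b) :
    w ≤ c + S * (1 - S - c) := by
  have h1 : a * b ≤ S * (1 - S - c) :=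
    mul_le_mul haS hbS hb0 (le_trans ha0 haS)
  nlinarith

lemma final_arith {c S P w : ℝ} (hc0 : 0 ≤ c) (h1c : 0 ≤ 1 - c) (hP : P ≤ 1 - S + S^2)
    (hmain : w ≤ c + S * (1 - S - c)) : w ≤ 1 - (1 - c) * P := by
  nlinarith [mul_le_mul_of_nonneg_left hP h1c, mul_nonneg hc0 (sq_nonneg S)]

section Subsolution
variable {n : ℕ} {R : Matrix (Fin n) (Fin n) ℝ} {β μ : ℝ}
  (hR : ∀ i j, R i j ∈ Set.Icc (0:ℝ) 1) (hβ : β ∈ Set.Ioo (0:ℝ) 1)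
  (hμ : μ ∈ Set.Ioo (0:ℝ) 1)

include hR hβ hμ in
lemma exists_subsolution {v : Fin n → ℝ} {l : ℝ} (hv0 : ∀ i, 0 ≤ v i) (hv1 : ∀ i, v i ≤ 1)
    (hl : 0 < l) (hlμ : μ < β * l) (hsub : ∀ i, l * v i ≤ R.mulVec v i) :
    ∃ ε : ℝ, 0 < ε ∧ (∀ i, ε * v i ∈ Set.Icc (0:ℝ) 1) ∧
      (∀ i, ε * v i ≤ F R β μ (fun j => ε * v j) i) := by
  have hβl : 0 < β * l := mul_pos hβ.1 hl
  have hn0 : (0:ℝ) ≤ (n:ℝ) := Nat.cast_nonneg n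
  have hden : (0:ℝ) < β * n + 1 := by nlinarith [hβ.1]
  obtain ⟨ε, hε0, hεle1, hδhalf, hδ2⟩ :
      ∃ ε : ℝ, 0 < ε ∧ ε ≤ 1 ∧ ε * (β * n + 1) ≤ 1/2 ∧
        β * l * (ε * (β * n + 1)) ≤ β * l - μ := by
    refine ⟨min (1/(2*(β * n + 1))) ((β*l - μ)/(β*l*(β * n + 1))), ?_, ?_, ?_, ?_⟩
    · exact lt_min (by positivity) (div_pos (by linarith) (by positivity))
    · have h2 : 1/(2*(β * n + 1)) ≤ 1/2 := by
        apply one_div_le_one_div_of_le (by norm_num)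
        nlinarith
      have := min_le_left (1/(2*(β * n + 1))) ((β*l - μ)/(β*l*(β * n + 1)))
      linarith
    · have h1 := min_le_left (1/(2*(β * n + 1))) ((β*l - μ)/(β*l*(β * n + 1)))
      calc min (1/(2*(β * n + 1))) ((β*l - μ)/(β*l*(β * n + 1))) * (β * n + 1)
          ≤ (1/(2*(β * n + 1))) * (β * n + 1) := mul_le_mul_of_nonneg_right h1 hden.le
        _ = 1/2 := by field_simp
    · have h1 := min_le_right (1/(2*(β * n + 1))) ((β*l - μ)/(β*l*(β * n + 1)))
      have h := mul_le_mul_of_nonneg_right h1 (by positivity : (0:ℝ) ≤ β*l*(β * n + 1))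
      rw [div_mul_cancel₀ _ (by positivity : (β*l*(β * n + 1)) ≠ 0)] at h
      nlinarith
  have hmem : ∀ i, ε * v i ∈ Set.Icc (0:ℝ) 1 := fun i =>
    ⟨mul_nonneg hε0.le (hv0 i), mul_le_one₀ hεle1 (hv0 i) (hv1 i)⟩
  refine ⟨ε, hε0, hmem, ?_⟩
  intro i
  have hfac : ∀ j, 0 ≤ β * R i j * (ε * v j) ∧ β * R i j * (ε * v j) ≤ 1 := fun j =>
    brx_mem hβ.1.le hβ.2.le (hR i j).1 (hR i j).2 (hmem j).1 (hmem j).2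
  have hS0 : 0 ≤ ∑ j, β * R i j * (ε * v j) := Finset.sum_nonneg fun j _ => (hfac j).1
  have hSub : ∑ j, β * R i j * (ε * v j) ≤ ε * β * n := by
    have hterm : ∀ j ∈ Finset.univ, β * R i j * (ε * v j) ≤ β * ε := by
      intro j _
      have h1 : R i j * v j ≤ 1 := mul_le_one₀ (hR i j).2 (hv0 j) (hv1 j)
      have hbe : 0 ≤ β * ε := mul_nonneg hβ.1.le hε0.le
      calc β * R i j * (ε * v j) = (β * ε) * (R i j * v j) := by ring
        _ ≤ (β * ε) * 1 := mul_le_mul_of_nonneg_left h1 hbe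
        _ = β * ε := mul_one _
    calc ∑ j, β * R i j * (ε * v j) ≤ ∑ _j : Fin n, β * ε := Finset.sum_le_sum hterm
      _ = n * (β * ε) := by rw [Finset.sum_const, Finset.card_univ, Fintype.card_fin, nsmul_eq_mul]
      _ = ε * β * n := by ring
  have hSlb : ε * β * (l * v i) ≤ ∑ j, β * R i j * (ε * v j) := by
    have h1 : ε * β * (l * v i) ≤ ε * β * (R.mulVec v i) :=
      mul_le_mul_of_nonneg_left (hsub i) (mul_nonneg hε0.le hβ.1.le)
    have h2 : ε * β * (R.mulVec v i) = ∑ j, β * R i j * (ε * v j) := by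
      rw [Matrix.mulVec, dotProduct, Finset.mul_sum]
      exact Finset.sum_congr rfl fun j _ => by ring
    linarith
  have hprod : ∏ j, (1 - β * R i j * (ε * v j)) ≤
      1 - (∑ j, β * R i j * (ε * v j)) + (∑ j, β * R i j * (ε * v j))^2 :=
    prod_one_sub_le Finset.univ _ (fun j _ => hfac j)
  obtain ⟨hx0, hx1⟩ := hmem i
  have hc0 : 0 ≤ (1 - μ) * (ε * v i) := mul_nonneg (by linarith [hμ.2]) hx0
  have hxε : ε * v i ≤ ε := by nlinarith [mul_le_mul_of_nonneg_left (hv1 i) hε0.le]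
  have hcε : (1 - μ) * (ε * v i) ≤ ε := by nlinarith [mul_nonneg hμ.1.le hx0]
  have hhalf : 1 - ε * (β * n + 1) ≤
      1 - (∑ j, β * R i j * (ε * v j)) - (1 - μ) * (ε * v i) := by nlinarith
  have hb0 : (0:ℝ) ≤ 1 - ε * (β * n + 1) := by linarith
  have hg : μ ≤ β * l * (1 - ε * (β * n + 1)) := by nlinarith
  have hab : (ε * v i) * μ ≤ (ε * β * (l * v i)) * (1 - ε * (β * n + 1)) := by
    have h3 : 0 ≤ (ε * v i) * (β * l * (1 - ε * (β * n + 1)) - μ) :=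
      mul_nonneg (mul_nonneg hε0.le (hv0 i)) (by linarith)
    nlinarith
  have ha0 : 0 ≤ ε * β * (l * v i) :=
    mul_nonneg (mul_nonneg hε0.le hβ.1.le) (mul_nonneg hl.le (hv0 i))
  have hmain := subsol_arith ha0 hSlb hb0 hhalf rfl hx0 hab
  have h1c : 0 ≤ 1 - (1 - μ) * (ε * v i) := by nlinarith
  exact final_arith hc0 h1c hprod hmain
end Subsolution
section Spec
variable {n : ℕ} {R : Matrix (Fin n) (Fin n) ℝ}

lemma spec_eigen {z : ℝ} (hz : z ∈ spectrum ℝ R) :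
    ∃ x : Fin n → ℝ, x ≠ 0 ∧ R.mulVec x = z • x := by
  have h1 : ¬IsUnit (algebraMap ℝ (Matrix (Fin n) (Fin n) ℝ) z - R) := spectrum.mem_iff.mp hz
  have h2 : ¬IsUnit (algebraMap ℝ (Matrix (Fin n) (Fin n) ℝ) z - R).det := by
    intro h; exact h1 ((Matrix.isUnit_iff_isUnit_det _).mpr h)
  have h3 : (algebraMap ℝ (Matrix (Fin n) (Fin n) ℝ) z - R).det = 0 := by
    by_contra h; exact h2 (isUnit_iff_ne_zero.mpr h)
  obtain ⟨x, hx0, hx⟩ := (Matrix.exists_mulVec_eq_zero_iff).mpr h3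
  refine ⟨x, hx0, ?_⟩
  have halg : (algebraMap ℝ (Matrix (Fin n) (Fin n) ℝ) z - R).mulVec x
      = z • x - R.mulVec x := by
    funext i
    simp [Matrix.sub_mulVec, Matrix.algebraMap_eq_diagonal, Matrix.mulVec_diagonal]
  rw [halg] at hx
  have := sub_eq_zero.mp hx
  exact this.symm

lemma eigen_spec {z : ℝ} {x : Fin n → ℝ} (hx0 : x ≠ 0) (hx : R.mulVec x = z • x) :
    z ∈ spectrum ℝ R := by
  rw [spectrum.mem_iff]
  intro h
  have hdet := (Matrix.isUnit_iff_isUnit_det _).mp h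
  have h3 : (algebraMap ℝ (Matrix (Fin n) (Fin n) ℝ) z - R).det ≠ 0 := hdet.ne_zero
  apply h3
  apply (Matrix.exists_mulVec_eq_zero_iff).mp
  refine ⟨x, hx0, ?_⟩
  have halg : (algebraMap ℝ (Matrix (Fin n) (Fin n) ℝ) z - R).mulVec x
      = z • x - R.mulVec x := by
    funext i
    simp [Matrix.sub_mulVec, Matrix.algebraMap_eq_diagonal, Matrix.mulVec_diagonal]
  rw [halg, hx, sub_self]
end Spec

section Ray
variable {n : ℕ} (R : Matrix (Fin n) (Fin n) ℝ)

/-- quadratic form -/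
noncomputable def qf (x : Fin n → ℝ) : ℝ := ∑ i, ∑ j, R i j * x i * x j

/-- the constraint set -/
def Kset (n : ℕ) : Set (Fin n → ℝ) := {x | (∀ i, 0 ≤ x i) ∧ ∑ i, (x i)^2 = 1}

lemma qf_eq_dot (x : Fin n → ℝ) : qf R x = dotProduct x (R.mulVec x) := by
  unfold qf
  rw [dotProduct]
  apply Finset.sum_congr rfl
  intro i _
  rw [Matrix.mulVec, dotProduct, Finset.mul_sum]
  apply Finset.sum_congr rfl
  intro j _
  ring

lemma qf_cont : Continuous (qf R) := by
  unfold qf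
  apply continuous_finset_sum
  intro i _
  apply continuous_finset_sum
  intro j _
  fun_prop

lemma Kset_compact : IsCompact (Kset n) := by
  have hsub : Kset n ⊆ Set.Icc (fun _ => -1 : Fin n → ℝ) (fun _ => 1) := by
    rintro x ⟨hx0, hx1⟩
    constructor
    · intro i; exact le_trans (by norm_num) (hx0 i)
    · intro i
      have h1 : (x i)^2 ≤ 1 := by
        rw [← hx1]
        exact Finset.single_le_sum (f := fun j => (x j)^2) (fun j _ => sq_nonneg _)
          (Finset.mem_univ i)
      show x i ≤ 1
      nlinarith [hx0 i]
  have hclosed : IsClosed (Kset n) := by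
    have h1 : IsClosed {x : Fin n → ℝ | ∀ i, 0 ≤ x i} := by
      have : {x : Fin n → ℝ | ∀ i, 0 ≤ x i} = ⋂ i, {x | 0 ≤ x i} := by
        ext x; simp
      rw [this]
      exact isClosed_iInter fun i => isClosed_le continuous_const (continuous_apply i)
    have h2 : IsClosed {x : Fin n → ℝ | ∑ i, (x i)^2 = 1} :=
      isClosed_eq (by fun_prop) continuous_const
    exact (h1.inter h2 : _)
  exact (isCompact_Icc).of_isClosed_subset hclosed hsub

lemma Kset_nonempty (hn : 1 ≤ n) : (Kset n).Nonempty := by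
  have : NeZero n := ⟨by omega⟩
  refine ⟨Pi.single (0 : Fin n) 1, fun i => ?_, ?_⟩
  · rcases eq_or_ne i 0 with rfl | h
    · simp
    · simp [Pi.single_eq_of_ne h]
  · rw [Finset.sum_eq_single (0 : Fin n)]
    · simp
    · intro b _ hb; simp [Pi.single_eq_of_ne hb]
    · simp
end Ray

section Ray2
variable {n : ℕ} {R : Matrix (Fin n) (Fin n) ℝ} {L : ℝ}

lemma qf_scale_bound (hmax : ∀ u ∈ Kset n, qf R u ≤ L)
    {y : Fin n → ℝ} (hy : ∀ i, 0 ≤ y i) : qf R y ≤ L * ∑ i, (y i)^2 := by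
  rcases eq_or_lt_of_le (Finset.sum_nonneg (fun i (_ : i ∈ Finset.univ) => sq_nonneg (y i)))
    with h0 | hpos
  · -- sum of squares is zero, so y = 0
    have hzero : ∀ i, y i = 0 := by
      intro i
      have := (Finset.sum_eq_zero_iff_of_nonneg
        (fun j (_ : j ∈ Finset.univ) => sq_nonneg (y j))).mp h0.symm i (Finset.mem_univ i)
      exact pow_eq_zero_iff (n := 2) (by norm_num) |>.mp this
    have h1 : qf R y = 0 := by
      unfold qf
      apply Finset.sum_eq_zero; intro i _
      apply Finset.sum_eq_zero; intro j _
      rw [hzero j, mul_zero]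
    rw [h1, ← h0]
    simp
  · set c : ℝ := Real.sqrt (∑ i, (y i)^2) with hc
    have hc0 : 0 < c := Real.sqrt_pos.mpr hpos
    have hc2 : c^2 = ∑ i, (y i)^2 := Real.sq_sqrt hpos.le
    have hu : (fun i => y i / c) ∈ Kset n := by
      constructor
      · intro i; exact div_nonneg (hy i) hc0.le
      · have : ∀ i ∈ Finset.univ, (y i / c)^2 = (y i)^2 / c^2 := fun i _ => div_pow _ _ _
        rw [Finset.sum_congr rfl this, ← Finset.sum_div, ← hc2, div_self (by positivity)]
    have h2 := hmax _ hu
    have h3 : qf R (fun i => y i / c) = qf R y / c^2 := by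
      unfold qf
      rw [Finset.sum_div]
      apply Finset.sum_congr rfl; intro i _
      rw [Finset.sum_div]
      apply Finset.sum_congr rfl; intro j _
      have hd : (y i / c) * (y j / c) = y i * y j / c^2 := by rw [div_mul_div_comm, sq]
      rw [mul_assoc, hd]
      ring
    rw [h3, div_le_iff₀ (by positivity)] at h2
    calc qf R y ≤ L * c^2 := h2
      _ = L * ∑ i, (y i)^2 := by rw [hc2]

lemma spec_abs_le (hR : ∀ i j, R i j ∈ Set.Icc (0:ℝ) 1)
    (hmax : ∀ u ∈ Kset n, qf R u ≤ L) : ∀ z ∈ spectrum ℝ R, |z| ≤ L := by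
  intro z hz
  obtain ⟨x, hx0, hx⟩ := spec_eigen hz
  have hpos : 0 < ∑ i, (x i)^2 := by
    obtain ⟨i, hi⟩ := Function.ne_iff.mp hx0
    apply Finset.sum_pos' (fun j _ => sq_nonneg (x j))
    exact ⟨i, Finset.mem_univ i, sq_pos_of_ne_zero hi⟩
  have h2 : qf R x = z * ∑ i, (x i)^2 := by
    rw [qf_eq_dot, hx, dotProduct_smul]
    rw [smul_eq_mul]
    congr 1
    unfold dotProduct
    exact Finset.sum_congr rfl fun i _ => (sq (x i)).symm ▸ (pow_two (x i)).symm ▸ rfl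
  have h3 : |qf R x| ≤ qf R (fun i => |x i|) := by
    unfold qf
    calc |∑ i, ∑ j, R i j * x i * x j| ≤ ∑ i, |∑ j, R i j * x i * x j| :=
          Finset.abs_sum_le_sum_abs _ _
      _ ≤ ∑ i, ∑ j, |R i j * x i * x j| :=
          Finset.sum_le_sum fun i _ => Finset.abs_sum_le_sum_abs _ _
      _ = ∑ i, ∑ j, R i j * |x i| * |x j| := by
          apply Finset.sum_congr rfl; intro i _
          apply Finset.sum_congr rfl; intro j _
          rw [abs_mul, abs_mul, abs_of_nonneg (hR i j).1]
    
  have h4 : qf R (fun i => |x i|) ≤ L * ∑ i, (x i)^2 := by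
    have := qf_scale_bound hmax (y := fun i => |x i|) (fun i => abs_nonneg _)
    simpa [sq_abs] using this
  have h5 : |z| * ∑ i, (x i)^2 ≤ L * ∑ i, (x i)^2 := by
    calc |z| * ∑ i, (x i)^2 = |z * ∑ i, (x i)^2| := by
          rw [abs_mul, abs_of_nonneg hpos.le]
      _ = |qf R x| := by rw [h2]
      _ ≤ qf R (fun i => |x i|) := h3
      _ ≤ L * ∑ i, (x i)^2 := h4
  exact le_of_mul_le_mul_right h5 hpos
end Ray2

section Ray3
variable {n : ℕ} {R : Matrix (Fin n) (Fin n) ℝ}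

lemma dot_self_eq_sumsq (v : Fin n → ℝ) : dotProduct v v = ∑ j, (v j)^2 :=
  Finset.sum_congr rfl fun j _ => (sq (v j)).symm

lemma qf_expand (hsymm : R.IsSymm) (hdiag : ∀ i, R i i = 0) (w : Fin n → ℝ) (s : ℝ)
    (i : Fin n) :
    qf R (w - s • (Pi.single i 1 : Fin n → ℝ)) = qf R w - 2*s*(R.mulVec w i) := by
  set p : Fin n → ℝ := Pi.single i 1 with hp
  rw [qf_eq_dot, qf_eq_dot]
  have hmv : R.mulVec (w - s • p) = R.mulVec w - s • R.mulVec p := by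
    rw [Matrix.mulVec_sub, Matrix.mulVec_smul]
  rw [hmv, dotProduct_sub, sub_dotProduct, sub_dotProduct,
    smul_dotProduct, smul_dotProduct, dotProduct_smul,
    dotProduct_smul]
  have h1 : dotProduct p (R.mulVec w) = R.mulVec w i := by
    rw [hp, single_dotProduct, one_mul]
  have h2 : dotProduct w (R.mulVec p) = R.mulVec w i := by
    rw [hp, Matrix.mulVec_single]
    unfold dotProduct Matrix.mulVec dotProduct
    apply Finset.sum_congr rfl
    intro a _
    show w a * (R a i * 1) = R i a * w a
    rw [mul_one, hsymm.apply a i]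
    ring
  have h3 : dotProduct p (R.mulVec p) = 0 := by
    rw [hp, single_dotProduct, one_mul, Matrix.mulVec_single]
    show R i i * 1 = 0
    rw [mul_one, hdiag i]
  rw [h1, h2, h3]
  simp only [smul_eq_mul]
  ring

lemma sumsq_expand (w : Fin n → ℝ) (s : ℝ) (i : Fin n) :
    ∑ j, ((w - s • (Pi.single i 1 : Fin n → ℝ)) j)^2
      = (∑ j, (w j)^2) - 2*s*(w i) + s^2 := by
  set p : Fin n → ℝ := Pi.single i 1 with hp
  rw [← dot_self_eq_sumsq, ← dot_self_eq_sumsq]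
  rw [dotProduct_sub, sub_dotProduct, sub_dotProduct,
    smul_dotProduct, smul_dotProduct, dotProduct_smul,
    dotProduct_smul]
  have h1 : dotProduct p w = w i := by
    rw [hp, single_dotProduct, one_mul]
  have h2 : dotProduct w p = w i := by
    rw [hp, dotProduct_single, mul_one]
  have h3 : dotProduct p p = 1 := by
    rw [hp, single_dotProduct, one_mul, Pi.single_eq_same]
  rw [h1, h2, h3]
  simp only [smul_eq_mul]
  ring

lemma subeig (hsymm : R.IsSymm) (hdiag : ∀ i, R i i = 0)
    (hR : ∀ i j, R i j ∈ Set.Icc (0:ℝ) 1) {w : Fin n → ℝ} (hwK : w ∈ Kset n)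
    (hmax : ∀ u ∈ Kset n, qf R u ≤ qf R w) (hL : 0 < qf R w) :
    ∀ i, qf R w * w i ≤ R.mulVec w i := by
  intro i
  rcases eq_or_lt_of_le (hwK.1 i) with h0 | hpos
  · rw [← h0, mul_zero]
    have hmv : R.mulVec w i = ∑ j, R i j * w j := rfl
    rw [hmv]
    exact Finset.sum_nonneg fun j _ => mul_nonneg (hR i j).1 (hwK.1 j)
  · by_contra hcon
    push_neg at hcon
    have hδ : 0 < qf R w * w i - R.mulVec w i := by linarith
    obtain ⟨s, hs0, hsle1, hsle2⟩ :
        ∃ s : ℝ, 0 < s ∧ s ≤ w i ∧ qf R w * s ≤ qf R w * w i - R.mulVec w i := by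
      refine ⟨min (w i) ((qf R w * w i - R.mulVec w i) / qf R w),
        lt_min hpos (div_pos hδ hL), min_le_left _ _, ?_⟩
      have h := min_le_right (w i) ((qf R w * w i - R.mulVec w i) / qf R w)
      calc qf R w * min (w i) ((qf R w * w i - R.mulVec w i) / qf R w)
          ≤ qf R w * ((qf R w * w i - R.mulVec w i) / qf R w) :=
            mul_le_mul_of_nonneg_left h hL.le
        _ = qf R w * w i - R.mulVec w i := by field_simp
    have hy0 : ∀ j, 0 ≤ (w - s • (Pi.single i 1 : Fin n → ℝ)) j := by
      intro j
      rcases eq_or_ne j i with rfl | hj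
      · simp only [Pi.sub_apply, Pi.smul_apply, Pi.single_eq_same, smul_eq_mul, mul_one]
        linarith
      · simp only [Pi.sub_apply, Pi.smul_apply, Pi.single_eq_of_ne hj, smul_eq_mul, mul_zero]
        linarith [hwK.1 j]
    have hb := qf_scale_bound hmax hy0
    rw [qf_expand hsymm hdiag, sumsq_expand, hwK.2] at hb
    nlinarith [mul_pos hs0 hδ, mul_le_mul_of_nonneg_left hsle2 hs0.le]
end Ray3


section Final
variable {n : ℕ} {R : Matrix (Fin n) (Fin n) ℝ}

lemma exists_good_subeig (hn : 2 ≤ n) (hsymm : R.IsSymm)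
    (hR : ∀ i j, R i j ∈ Set.Icc (0:ℝ) 1) (hdiag : ∀ i, R i i = 0) (hirr : MatIrred R) :
    ∃ (w : Fin n → ℝ) (l : ℝ), specRad R ≤ l ∧ 0 < specRad R ∧
      (∀ i, 0 ≤ w i) ∧ (∀ i, w i ≤ 1) ∧ w ≠ 0 ∧ (∀ i, l * w i ≤ R.mulVec w i) := by
  have hn1 : 1 ≤ n := by omega
  obtain ⟨w, hwK, hwmax⟩ := (Kset_compact (n := n)).exists_isMaxOn (Kset_nonempty hn1)
    (qf_cont R).continuousOn
  have hmax : ∀ u ∈ Kset n, qf R u ≤ qf R w := fun u hu => hwmax hu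
  have hspec_bound := spec_abs_le hR hmax
  have hbdd : BddAbove {r : ℝ | ∃ z ∈ spectrum ℝ R, |z| = r} := by
    refine ⟨qf R w, ?_⟩
    rintro r ⟨z, hz, rfl⟩
    exact hspec_bound z hz
  -- R ≠ 0
  have hi0 : Fin n := ⟨0, by omega⟩
  have hne0 : R ≠ 0 := by
    intro h
    obtain ⟨k, hk, hne⟩ := hirr hi0 hi0
    apply hne
    rw [h, zero_pow hk.ne']
    rfl
  have hH : R.IsHermitian := by
    unfold Matrix.IsHermitian
    ext i j
    simp [Matrix.conjTranspose_apply, hsymm.apply]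
  obtain ⟨v, t, ht0, hv0, hvt⟩ := hH.exists_eigenvector_of_ne_zero hne0
  have htspec : t ∈ spectrum ℝ R := eigen_spec hv0 hvt
  have hrad_pos : 0 < specRad R := by
    have h1 : |t| ∈ {r : ℝ | ∃ z ∈ spectrum ℝ R, |z| = r} := ⟨t, htspec, rfl⟩
    have h2 : |t| ≤ specRad R := le_csSup hbdd h1
    have h3 : 0 < |t| := abs_pos.mpr ht0
    linarith
  have hL0 : 0 ≤ qf R w := le_trans (abs_nonneg t) (hspec_bound t htspec)
  have hrad_le : specRad R ≤ qf R w := by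
    apply Real.sSup_le _ hL0
    rintro r ⟨z, hz, rfl⟩
    exact hspec_bound z hz
  have hL : 0 < qf R w := lt_of_lt_of_le hrad_pos hrad_le
  have hw1 : ∀ i, w i ≤ 1 := by
    intro i
    have h1 : (w i)^2 ≤ 1 := by
      rw [← hwK.2]
      exact Finset.single_le_sum (f := fun j => (w j)^2) (fun j _ => sq_nonneg _)
        (Finset.mem_univ i)
    nlinarith [hwK.1 i]
  have hwne : w ≠ 0 := by
    intro h
    have := hwK.2
    rw [h] at this
    simp at this
  exact ⟨w, qf R w, hrad_le, hrad_pos, hwK.1, hw1, hwne,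
    subeig hsymm hdiag hR hwK hmax hL⟩
end Final

section Unique
variable {n : ℕ} {R : Matrix (Fin n) (Fin n) ℝ} {β μ : ℝ}
  (hR : ∀ i j, R i j ∈ Set.Icc (0:ℝ) 1) (hβ : β ∈ Set.Ioo (0:ℝ) 1)
  (hμ : μ ∈ Set.Ioo (0:ℝ) 1)

include hR hβ hμ in
lemma fixed_le (hn : 2 ≤ n) (hirr : MatIrred R)
    {y z : Fin n → ℝ} (hy : ∀ i, y i ∈ Set.Icc (0:ℝ) 1) (hyne : y ≠ 0)
    (hyfix : F R β μ y = y) (hz : ∀ i, z i ∈ Set.Icc (0:ℝ) 1) (hzne : z ≠ 0)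
    (hzfix : F R β μ z = z) : ∀ i, z i ≤ y i := by
  have hypos := fixed_pos hR hβ hμ hirr hy hyne hyfix
  have hzpos := fixed_pos hR hβ hμ hirr hz hzne hzfix
  have : Nonempty (Fin n) := ⟨⟨0, by omega⟩⟩
  obtain ⟨i₀, -, hmin⟩ := Finset.exists_min_image Finset.univ (fun i => y i / z i)
    Finset.univ_nonempty
  set t : ℝ := y i₀ / z i₀ with htdef
  have ht0 : 0 < t := div_pos (hypos i₀) (hzpos i₀)
  have hty : ∀ i, t * z i ≤ y i := by
    intro i
    have h1 : t ≤ y i / z i := hmin i (Finset.mem_univ i)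
    calc t * z i ≤ (y i / z i) * z i := mul_le_mul_of_nonneg_right h1 (hzpos i).le
      _ = y i := div_mul_cancel₀ _ (hzpos i).ne'
  by_cases ht1 : 1 ≤ t
  · intro i
    calc z i = 1 * z i := (one_mul _).symm
      _ ≤ t * z i := mul_le_mul_of_nonneg_right ht1 (hzpos i).le
      _ ≤ y i := hty i
  · exfalso
    push_neg at ht1
    obtain ⟨j₂, hj₂⟩ := row_ne_zero hirr i₀
    have hkey := F_strict_sublinear hR hβ hμ hzpos (fun i => (hz i).2) ht0 ht1 hj₂ (i := i₀)
    have htz : t * z i₀ = y i₀ := div_mul_cancel₀ _ (hzpos i₀).ne'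
    have htzmem : ∀ i, (t • z) i ∈ Set.Icc (0:ℝ) 1 := by
      intro i
      constructor
      · exact mul_nonneg ht0.le (hzpos i).le
      · calc t * z i ≤ 1 * z i := mul_le_mul_of_nonneg_right ht1.le (hzpos i).le
          _ = z i := one_mul _
          _ ≤ 1 := (hz i).2
    have hmono := F_mono R β μ hR hβ hμ htzmem hy
      (fun i => hty i) i₀
    rw [hyfix] at hmono
    rw [hzfix] at hkey
    -- hkey : t * z i₀ < F (t • z) i₀ ; hmono : F (t•z) i₀ ≤ y i₀
    rw [htz] at hkey
    linarith

end Unique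

theorem unique_nontrivial_fixed_point (n : ℕ) (hn : 2 ≤ n) (R : Matrix (Fin n) (Fin n) ℝ)
    (hsymm : R.IsSymm) (hR : ∀ i j, R i j ∈ Set.Icc (0:ℝ) 1)
    (hdiag : ∀ i, R i i = 0) (hirr : MatIrred R)
    (β μ : ℝ) (hβ : β ∈ Set.Ioo (0:ℝ) 1) (hμ : μ ∈ Set.Ioo (0:ℝ) 1)
    (hgt : μ / specRad R < β) :
    ∃! z₀ : Fin n → ℝ,
      (∀ i, z₀ i ∈ Set.Icc (0:ℝ) 1) ∧ z₀ ≠ 0 ∧ F R β μ z₀ = z₀ := by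
  obtain ⟨w, l, hrad_le, hrad_pos, hw0, hw1, hwne, hsubw⟩ :=
    exists_good_subeig hn hsymm hR hdiag hirr
  have hl : 0 < l := lt_of_lt_of_le hrad_pos hrad_le
  have hβl : μ < β * l := by
    have h1 : μ < β * specRad R := (div_lt_iff₀ hrad_pos).mp hgt
    have h2 : specRad R * β ≤ l * β := mul_le_mul_of_nonneg_right hrad_le hβ.1.le
    nlinarith
  have hsubw' : ∀ i, l * w i ≤ R.mulVec w i := hsubw
  obtain ⟨ε, hε0, hεmem, hεsub⟩ := exists_subsolution hR hβ hμ hw0 hw1 hl hβl hsubw'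
  obtain ⟨z, hzmem, hzge, hzfix⟩ := exists_fixed_above hR hβ hμ hεmem hεsub
  have hzne : z ≠ 0 := by
    obtain ⟨i, hi⟩ := Function.ne_iff.mp hwne
    have hwi : 0 < w i := lt_of_le_of_ne (hw0 i) (Ne.symm (by simpa using hi))
    have : 0 < z i := lt_of_lt_of_le (mul_pos hε0 hwi) (hzge i)
    intro h
    rw [h] at this
    exact lt_irrefl 0 this
  refine ⟨z, ⟨hzmem, hzne, hzfix⟩, ?_⟩
  rintro y ⟨hymem, hyne, hyfix⟩
  funext i
  exact le_antisymm
    (fixed_le hR hβ hμ hn hirr hzmem hzne hzfix hymem hyne hyfix i)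
    (fixed_le hR hβ hμ hn hirr hymem hyne hyfix hzmem hzne hzfix i)
end

section
/- If β > β₀, then there exists z₀ ∈ [0,1]^n with z₀ ≠ 0 and F(z₀) = z₀ such that for every x ∈ [0,1]^n with x ≠ 0, the sequence of iterates F^k(x) converges to z₀ as k → ∞ (the endemic state is a global attractor on [0,1]^n \ {0}). -/
/-!
`F` is monotone on the box `[0,1]^n` and maps it into itself, so its iterates from the top `1`
decrease to the largest fixed point `z₀`. Let `v > 0` be a Perron eigenvector, `R v = ρ(R) v`:
a maximiser `u` of the Rayleigh quotient of the nonnegative symmetric `R` may be replaced by `|u|`,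
which irreducibility makes positive.
Since `F x ≥ s - s²` for `s = (1 - μ) x + β R x`, and `1 - μ + β ρ(R) > 1`, small multiples
`ε v` satisfy `ε v ≤ F (ε v)`; their iterates increase to a positive fixed point below `z₀`.
The strict subhomogeneity `t F z < F (t z)` (`0 < t < 1`) allows only one positive fixed point,
so every positive `y`, squeezed between some `ε v` and `1`, is attracted to `z₀`. Irreducibility
makes some iterate of any nonzero `x` positive.
-/

open Filter Finset

open Matrix Function Topology

section ProdOneSub

variable {ι : Type*} {s : Finset ι} {p : ι → ℝ}

theorem prod_one_sub_mem_Icc (hp : ∀ j ∈ s, p j ∈ Set.Icc 0 1) :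
    ∏ j ∈ s, (1 - p j) ∈ Set.Icc 0 1 :=
  ⟨prod_nonneg fun j hj => sub_nonneg.2 (hp j hj).2,
    prod_le_one (fun j hj => sub_nonneg.2 (hp j hj).2) fun j hj => sub_le_self _ (hp j hj).1⟩

theorem prod_one_sub_le_one_sub (hp : ∀ j ∈ s, p j ∈ Set.Icc 0 1) {a : ι}
    (ha : a ∈ s) : ∏ j ∈ s, (1 - p j) ≤ 1 - p a := by
  classical
  rw [← mul_prod_erase s _ ha]
  exact mul_le_of_le_one_right (sub_nonneg.2 (hp a ha).2)
    (prod_one_sub_mem_Icc fun j hj => hp j (mem_of_mem_erase hj)).2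

theorem prod_one_sub_le_one_sub_sum_add_sq (hp : ∀ j ∈ s, p j ∈ Set.Icc 0 1) :
    ∏ j ∈ s, (1 - p j) ≤ 1 - ∑ j ∈ s, p j + (∑ j ∈ s, p j) ^ 2 := by
  induction s using Finset.cons_induction with
  | empty => simp
  | cons a s ha ih =>
    rw [prod_cons, sum_cons]
    have hpa := hp a (mem_cons_self a s)
    have hp' : ∀ j ∈ s, p j ∈ Set.Icc 0 1 := fun j hj => hp j (mem_cons_of_mem hj)
    have hsum : 0 ≤ ∑ j ∈ s, p j := sum_nonneg fun j hj => (hp' j hj).1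
    nlinarith [mul_le_mul_of_nonneg_left (ih hp') (sub_nonneg.2 hpa.2), hpa.1]

theorem mul_one_sub_prod_one_sub_le (hp : ∀ j ∈ s, p j ∈ Set.Icc 0 1) {t : ℝ}
    (ht : t ∈ Set.Icc 0 1) :
    t * (1 - ∏ j ∈ s, (1 - p j)) ≤ 1 - ∏ j ∈ s, (1 - t * p j) := by
  induction s using Finset.cons_induction with
  | empty => simp
  | cons a s ha ih =>
    rw [prod_cons, prod_cons]
    have hpa := hp a (mem_cons_self a s)
    have hp' : ∀ j ∈ s, p j ∈ Set.Icc 0 1 := fun j hj => hp j (mem_cons_of_mem hj)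
    have hPQ : ∏ j ∈ s, (1 - p j) ≤ ∏ j ∈ s, (1 - t * p j) :=
      prod_le_prod (fun j hj => sub_nonneg.2 (hp' j hj).2) fun j hj =>
        sub_le_sub_left (mul_le_of_le_one_left (hp' j hj).1 ht.2) _
    nlinarith [ih hp', mul_le_mul_of_nonneg_left hPQ (mul_nonneg ht.1 hpa.1)]

theorem prod_one_sub_lt_prod_one_sub_mul (hp : ∀ j ∈ s, p j ∈ Set.Icc 0 1)
    {t : ℝ} (ht : t ∈ Set.Ico 0 1) {b : ι} (hb : b ∈ s) (hpb : 0 < p b) :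
    ∏ j ∈ s, (1 - p j) < ∏ j ∈ s, (1 - t * p j) := by
  classical
  rw [← mul_prod_erase s _ hb, ← mul_prod_erase s (fun j => 1 - t * p j) hb]
  have hp' : ∀ j ∈ s.erase b, p j ∈ Set.Icc 0 1 := fun j hj => hp j (mem_of_mem_erase hj)
  have hle : ∏ j ∈ s.erase b, (1 - p j) ≤ ∏ j ∈ s.erase b, (1 - t * p j) :=
    prod_le_prod (fun j hj => sub_nonneg.2 (hp' j hj).2) fun j hj =>
      sub_le_sub_left (mul_le_of_le_one_left (hp' j hj).1 ht.2.le) _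
  have hpos : 0 < ∏ j ∈ s.erase b, (1 - t * p j) :=
    prod_pos fun j hj => sub_pos.2 ((mul_le_of_le_one_right ht.1 (hp' j hj).2).trans_lt ht.2)
  have hlt : 1 - p b < 1 - t * p b := by nlinarith [ht.2]
  calc (1 - p b) * ∏ j ∈ s.erase b, (1 - p j)
      ≤ (1 - p b) * ∏ j ∈ s.erase b, (1 - t * p j) :=
        mul_le_mul_of_nonneg_left hle (sub_nonneg.2 (hp b hb).2)
    _ < (1 - t * p b) * ∏ j ∈ s.erase b, (1 - t * p j) := mul_lt_mul_of_pos_right hlt hpos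

theorem mul_one_sub_prod_one_sub_lt (hp : ∀ j ∈ s, p j ∈ Set.Icc 0 1)
    {t : ℝ} (ht : t ∈ Set.Ioo 0 1) {a b : ι} (ha : a ∈ s) (hb : b ∈ s) (hab : a ≠ b)
    (hpa : 0 < p a) (hpb : 0 < p b) :
    t * (1 - ∏ j ∈ s, (1 - p j)) < 1 - ∏ j ∈ s, (1 - t * p j) := by
  classical
  rw [← mul_prod_erase s _ ha, ← mul_prod_erase s (fun j => 1 - t * p j) ha]
  have hp' : ∀ j ∈ s.erase a, p j ∈ Set.Icc 0 1 := fun j hj => hp j (mem_of_mem_erase hj)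
  have hweak := mul_one_sub_prod_one_sub_le hp' (Set.Ioo_subset_Icc_self ht)
  have hstrict := prod_one_sub_lt_prod_one_sub_mul hp' (Set.Ioo_subset_Ico_self ht)
    (mem_erase.2 ⟨hab.symm, hb⟩) hpb
  nlinarith [mul_lt_mul_of_pos_left hstrict (mul_pos ht.1 hpa)]

end ProdOneSub

section MonotoneDynamics

variable {α : Type*} [Preorder α] {f : α → α} {s : Set α} {x y : α}

theorem MonotoneOn.iterate_le_iterate (hf : MonotoneOn f s) (hs : Set.MapsTo f s s) (hx : x ∈ s)
    (hy : y ∈ s) (hxy : x ≤ y) (k : ℕ) : f^[k] x ≤ f^[k] y := by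
  induction k with
  | zero => exact hxy
  | succ k ih =>
    rw [iterate_succ_apply', iterate_succ_apply']
    exact hf (hs.iterate k hx) (hs.iterate k hy) ih

theorem MonotoneOn.monotone_iterate_of_le_map (hf : MonotoneOn f s) (hs : Set.MapsTo f s s)
    (hx : x ∈ s) (hxf : x ≤ f x) : Monotone fun k => f^[k] x :=
  monotone_nat_of_le_succ fun k => by
    rw [iterate_succ_apply]
    exact hf.iterate_le_iterate hs hx (hs hx) hxf k

theorem MonotoneOn.antitone_iterate_of_map_le (hf : MonotoneOn f s) (hs : Set.MapsTo f s s)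
    (hx : x ∈ s) (hfx : f x ≤ x) : Antitone fun k => f^[k] x :=
  antitone_nat_of_succ_le fun k => by
    rw [iterate_succ_apply]
    exact hf.iterate_le_iterate hs (hs hx) hx hfx k

end MonotoneDynamics

section OrderInterval

variable {α : Type*} [ConditionallyCompleteLattice α] [TopologicalSpace α]
  [OrderClosedTopology α] [T2Space α] {f : α → α} {a b x : α}

theorem exists_isFixedPt_tendsto_iterate_of_le_map [SupConvergenceClass α] (hf : Continuous f)
    (hmono : MonotoneOn f (Set.Icc a b)) (hmaps : Set.MapsTo f (Set.Icc a b) (Set.Icc a b))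
    (hx : x ∈ Set.Icc a b) (hxf : x ≤ f x) :
    ∃ z ∈ Set.Icc a b, x ≤ z ∧ IsFixedPt f z ∧
      Tendsto (fun k => f^[k] x) atTop (𝓝 z) := by
  have hxmono := hmono.monotone_iterate_of_le_map hmaps hx hxf
  have htend := tendsto_atTop_ciSup hxmono
    ⟨b, by rintro _ ⟨k, rfl⟩; exact (hmaps.iterate k hx).2⟩
  exact ⟨_, isClosed_Icc.mem_of_tendsto htend (.of_forall (hmaps.iterate · hx)),
    hxmono.ge_of_tendsto htend 0, isFixedPt_of_tendsto_iterate htend hf.continuousAt, htend⟩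

theorem exists_isFixedPt_tendsto_iterate_of_map_le [InfConvergenceClass α] (hf : Continuous f)
    (hmono : MonotoneOn f (Set.Icc a b)) (hmaps : Set.MapsTo f (Set.Icc a b) (Set.Icc a b))
    (hx : x ∈ Set.Icc a b) (hfx : f x ≤ x) :
    ∃ z ∈ Set.Icc a b, z ≤ x ∧ IsFixedPt f z ∧
      Tendsto (fun k => f^[k] x) atTop (𝓝 z) := by
  have hxanti := hmono.antitone_iterate_of_map_le hmaps hx hfx
  have htend := tendsto_atTop_ciInf hxanti
    ⟨a, by rintro _ ⟨k, rfl⟩; exact (hmaps.iterate k hx).1⟩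
  exact ⟨_, isClosed_Icc.mem_of_tendsto htend (.of_forall (hmaps.iterate · hx)),
    hxanti.le_of_tendsto htend 0, isFixedPt_of_tendsto_iterate htend hf.continuousAt, htend⟩

end OrderInterval

section PositiveFixedPoint

variable {ι : Type*} [Fintype ι] {f : (ι → ℝ) → ι → ℝ}

/-- The argument is Krause's: compare `z` with the largest multiple `t • z` lying below `w`. -/
theorem le_of_isFixedPt_of_lt_map_smul (hmono : MonotoneOn f (Set.Icc 0 1))
    (hsub : ∀ z ∈ Set.Icc 0 1, (∀ i, 0 < z i) → ∀ t ∈ Set.Ioo 0 1, ∀ i,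
      t * f z i < f (t • z) i)
    {z w : ι → ℝ} (hz : z ∈ Set.Icc 0 1) (hw : w ∈ Set.Icc 0 1) (hzpos : ∀ i, 0 < z i)
    (hwpos : ∀ i, 0 < w i) (hfz : IsFixedPt f z) (hfw : IsFixedPt f w) : z ≤ w := by
  by_contra hzw
  obtain ⟨i₁, hi₁⟩ : ∃ i, w i < z i := by simpa [Pi.le_def] using hzw
  obtain ⟨i₀, -, hmin⟩ := exists_min_image univ (fun i => w i / z i) ⟨i₁, mem_univ _⟩
  set t := w i₀ / z i₀
  have htz : t • z ≤ w := fun i =>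
    (le_div_iff₀ (hzpos i)).1 (hmin i (mem_univ _))
  have ht : t ∈ Set.Ioo 0 1 :=
    ⟨div_pos (hwpos i₀) (hzpos i₀),
      (hmin i₁ (mem_univ _)).trans_lt ((div_lt_one (hzpos i₁)).2 hi₁)⟩
  have htz_mem : t • z ∈ Set.Icc 0 1 :=
    ⟨smul_nonneg ht.1.le hz.1, htz.trans hw.2⟩
  refine lt_irrefl (w i₀) ?_
  calc w i₀ = t * f z i₀ := by rw [hfz.eq, div_mul_cancel₀ _ (hzpos i₀).ne']
    _ < f (t • z) i₀ := hsub z hz hzpos t ht i₀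
    _ ≤ f w i₀ := hmono htz_mem hw htz i₀
    _ = w i₀ := by rw [hfw.eq]

theorem exists_pos_isFixedPt_tendsto_iterate (hf : Continuous f)
    (hmono : MonotoneOn f (Set.Icc 0 1)) (hmaps : Set.MapsTo f (Set.Icc 0 1) (Set.Icc 0 1))
    (hsub : ∀ z ∈ Set.Icc 0 1, (∀ i, 0 < z i) → ∀ t ∈ Set.Ioo 0 1, ∀ i,
      t * f z i < f (t • z) i)
    (hlow : ∀ y ∈ Set.Icc 0 1, (∀ i, 0 < y i) →
      ∃ x ∈ Set.Icc 0 1, (∀ i, 0 < x i) ∧ x ≤ y ∧ x ≤ f x) :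
    ∃ z ∈ Set.Icc 0 1, (∀ i, 0 < z i) ∧ IsFixedPt f z ∧
      ∀ y ∈ Set.Icc 0 1, (∀ i, 0 < y i) → Tendsto (fun k => f^[k] y) atTop (𝓝 z) := by
  have hone : (1 : ι → ℝ) ∈ Set.Icc 0 1 := ⟨zero_le_one, le_rfl⟩
  obtain ⟨z, hz, -, hfz, hztend⟩ :=
    exists_isFixedPt_tendsto_iterate_of_map_le hf hmono hmaps hone (hmaps hone).2
  have hmax : ∀ w ∈ Set.Icc 0 1, IsFixedPt f w → w ≤ z := fun w hw hfw =>
    ge_of_tendsto' hztend fun k =>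
      (hfw.iterate k).eq ▸ hmono.iterate_le_iterate hmaps hw hone hw.2 k
  have hattract : ∀ y ∈ Set.Icc 0 1, (∀ i, 0 < y i) →
      (∀ i, 0 < z i) ∧ Tendsto (fun k => f^[k] y) atTop (𝓝 z) := by
    intro y hy hypos
    obtain ⟨x, hx, hxpos, hxy, hxf⟩ := hlow y hy hypos
    obtain ⟨w, hw, hxw, hfw, hwtend⟩ :=
      exists_isFixedPt_tendsto_iterate_of_le_map hf hmono hmaps hx hxf
    have hwpos : ∀ i, 0 < w i := fun i => (hxpos i).trans_le (hxw i)
    have hzpos : ∀ i, 0 < z i := fun i => (hwpos i).trans_le (hmax w hw hfw i)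
    obtain rfl : w = z := (hmax w hw hfw).antisymm
      (le_of_isFixedPt_of_lt_map_smul hmono hsub hz hw hzpos hwpos hfz hfw)
    refine ⟨hzpos, tendsto_pi_nhds.2 fun i => ?_⟩
    refine tendsto_of_tendsto_of_tendsto_of_le_of_le (tendsto_pi_nhds.1 hwtend i)
      (tendsto_pi_nhds.1 hztend i) (fun k => ?_) (fun k => ?_)
    · exact hmono.iterate_le_iterate hmaps hx hy hxy k i
    · exact hmono.iterate_le_iterate hmaps hy hone hy.2 k i
  exact ⟨z, hz, (hattract 1 hone fun _ => one_pos).1, hfz,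
    fun y hy hypos => (hattract y hy hypos).2⟩

end PositiveFixedPoint

theorem exists_pos_forall_mul_le {ι : Type*} [Finite ι] (v : ι → ℝ) {c : ι → ℝ}
    (hc : ∀ i, 0 < c i) : ∃ ε > 0, ∀ i, ε * v i ≤ c i := by
  have h : ∀ i, ∀ᶠ ε in 𝓝 (0 : ℝ), ε * v i < c i := fun i =>
    ((continuous_mul_const (v i)).tendsto' 0 0 (zero_mul _)).eventually_lt_const (hc i)
  obtain ⟨ε, hε, hεv⟩ := (eventually_mem_nhdsWithin.and
    (nhdsWithin_le_nhds (eventually_all.2 h))).exists (f := 𝓝[>] (0 : ℝ))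
  exact ⟨ε, hε, fun i => (hεv i).le⟩

section SymmetricMatrix

variable {ι : Type*} [Fintype ι] {R : Matrix ι ι ℝ}

theorem abs_dotProduct_mulVec_le (hR : ∀ i j, 0 ≤ R i j) (x : ι → ℝ) :
    |x ⬝ᵥ R *ᵥ x| ≤ |x| ⬝ᵥ R *ᵥ |x| := by
  simp only [dotProduct, mulVec, Pi.abs_apply, mul_sum]
  refine (abs_sum_le_sum_abs _ _).trans <| sum_le_sum fun i _ =>
    (abs_sum_le_sum_abs _ _).trans <| sum_le_sum fun j _ => ?_
  rw [abs_mul, abs_mul, abs_of_nonneg (hR i j)]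

theorem mem_spectrum_iff_exists_mulVec_eq_smul [DecidableEq ι] {c : ℝ} :
    c ∈ spectrum ℝ R ↔ ∃ u ≠ 0, R *ᵥ u = c • u := by
  rw [← spectrum_toLin', ← Module.End.hasEigenvalue_iff_mem_spectrum]
  constructor
  · intro h
    obtain ⟨u, hu, hu0⟩ := h.exists_hasEigenvector
    exact ⟨u, hu0, by simpa using Module.End.mem_eigenspace_iff.mp hu⟩
  · rintro ⟨u, hu0, hu⟩
    exact Module.End.hasEigenvalue_of_hasEigenvector
      ⟨Module.End.mem_eigenspace_iff.mpr (by simpa using hu), hu0⟩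

theorem reApplyInnerSelf_toEuclideanCLM [DecidableEq ι] (y : EuclideanSpace ℝ ι) :
    (toEuclideanCLM (𝕜 := ℝ) R).reApplyInnerSelf y = y.ofLp ⬝ᵥ R *ᵥ y.ofLp := by
  rw [ContinuousLinearMap.reApplyInnerSelf_apply, real_inner_comm, inner_toEuclideanCLM]
  rfl

theorem EuclideanSpace.norm_sq_eq_dotProduct (y : EuclideanSpace ℝ ι) :
    ‖y‖ ^ 2 = y.ofLp ⬝ᵥ y.ofLp := by
  rw [EuclideanSpace.norm_sq_eq]
  simp [dotProduct, sq]

theorem Matrix.IsSymm.exists_rayleigh_max [DecidableEq ι] [Nonempty ι] (hsymm : R.IsSymm) :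
    ∃ r : ℝ, (∀ x, x ⬝ᵥ R *ᵥ x ≤ r * (x ⬝ᵥ x)) ∧ (∃ u ≠ 0, R *ᵥ u = r • u) ∧
      ∀ w ≠ 0, r * (w ⬝ᵥ w) ≤ w ⬝ᵥ R *ᵥ w → R *ᵥ w = r • w := by
  set T := toEuclideanCLM (𝕜 := ℝ) R
  have hT : IsSelfAdjoint T := (isHermitian_iff_isSymm.mpr hsymm).isSelfAdjoint.map _
  have hq (y : EuclideanSpace ℝ ι) : T.reApplyInnerSelf y = y.ofLp ⬝ᵥ R *ᵥ y.ofLp :=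
    reApplyInnerSelf_toEuclideanCLM y
  set r := ⨆ x : {x : EuclideanSpace ℝ ι // x ≠ 0}, T.rayleighQuotient x
  have hbound (y : EuclideanSpace ℝ ι) : T.reApplyInnerSelf y ≤ r * ‖y‖ ^ 2 := by
    rcases eq_or_ne y 0 with rfl | hy
    · simp [hq]
    have hbdd : BddAbove (Set.range fun y : {y : EuclideanSpace ℝ ι // y ≠ 0} =>
        T.rayleighQuotient y) :=
      ⟨‖T‖, by rintro _ ⟨y, rfl⟩; exact (abs_le.mp (T.rayleighQuotient_le_norm y)).2⟩
    have h := le_ciSup hbdd ⟨y, hy⟩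
    rwa [ContinuousLinearMap.rayleighQuotient, div_le_iff₀ (by positivity)] at h
  refine ⟨r, fun x => ?_, ?_, fun w hw0 hw => ?_⟩
  · simpa [hq, EuclideanSpace.norm_sq_eq_dotProduct] using hbound (WithLp.toLp 2 x)
  · obtain ⟨u, hu, hu0⟩ :=
      (hT.isSymmetric.hasEigenvalue_iSup_of_finiteDimensional).exists_hasEigenvector
    exact ⟨u.ofLp, by simpa using hu0,
      congrArg WithLp.ofLp (Module.End.mem_eigenspace_iff.mp hu)⟩
  · have hmax : IsMaxOn T.reApplyInnerSelf (Metric.sphere 0 ‖WithLp.toLp 2 w‖)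
        (WithLp.toLp 2 w) := fun y hy => by
      rw [mem_sphere_zero_iff_norm] at hy
      change T.reApplyInnerSelf y ≤ T.reApplyInnerSelf (WithLp.toLp 2 w)
      rw [hq (WithLp.toLp 2 w)]
      refine (hy ▸ hbound y).trans ?_
      rwa [EuclideanSpace.norm_sq_eq_dotProduct]
    exact congrArg WithLp.ofLp (Module.End.mem_eigenspace_iff.mp
      (hT.hasEigenvector_of_isMaxOn (by simpa using hw0) hmax).1)

theorem Matrix.IsSymm.exists_nonneg_eigenvector [DecidableEq ι] [Nonempty ι] (hsymm : R.IsSymm)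
    (hR : ∀ i j, 0 ≤ R i j) : ∃ (r : ℝ) (v : ι → ℝ), 0 ≤ v ∧ v ≠ 0 ∧ R *ᵥ v = r • v ∧
      ∀ x, x ⬝ᵥ R *ᵥ x ≤ r * (x ⬝ᵥ x) := by
  obtain ⟨r, hbound, ⟨u, hu0, hRu⟩, hmax⟩ := hsymm.exists_rayleigh_max
  have habs : |u| ⬝ᵥ |u| = u ⬝ᵥ u := by simp [dotProduct, abs_mul_abs_self]
  have hw0 : |u| ≠ 0 := by simpa using hu0
  refine ⟨r, |u|, abs_nonneg u, hw0, hmax |u| hw0 ?_, hbound⟩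
  calc r * (|u| ⬝ᵥ |u|) = u ⬝ᵥ R *ᵥ u := by rw [habs, hRu, dotProduct_smul, smul_eq_mul]
    _ ≤ |u| ⬝ᵥ R *ᵥ |u| := (le_abs_self _).trans (abs_dotProduct_mulVec_le hR u)

theorem abs_le_of_mem_spectrum [DecidableEq ι] (hR : ∀ i j, 0 ≤ R i j) {r : ℝ}
    (hbound : ∀ x, x ⬝ᵥ R *ᵥ x ≤ r * (x ⬝ᵥ x)) {c : ℝ} (hc : c ∈ spectrum ℝ R) :
    |c| ≤ r := by
  obtain ⟨u, hu0, hu⟩ := mem_spectrum_iff_exists_mulVec_eq_smul.mp hc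
  have hpos : 0 < u ⬝ᵥ u :=
    (sum_nonneg fun i _ => mul_self_nonneg (u i)).lt_of_ne
      (Ne.symm (mt dotProduct_self_eq_zero.1 hu0))
  have habs : |u| ⬝ᵥ |u| = u ⬝ᵥ u := by simp [dotProduct, abs_mul_abs_self]
  refine le_of_mul_le_mul_right ?_ hpos
  calc |c| * (u ⬝ᵥ u) = |u ⬝ᵥ R *ᵥ u| := by
        rw [hu, dotProduct_smul, smul_eq_mul, abs_mul, abs_of_pos hpos]
    _ ≤ |u| ⬝ᵥ R *ᵥ |u| := abs_dotProduct_mulVec_le hR u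
    _ ≤ r * (u ⬝ᵥ u) := habs ▸ hbound |u|

end SymmetricMatrix

section Perron

variable {n : ℕ} {R : Matrix (Fin n) (Fin n) ℝ}

theorem MatIrred.exists_pos (hR : ∀ i j, 0 ≤ R i j) (hirr : MatIrred R) (i : Fin n) :
    ∃ j, 0 < R i j := by
  obtain ⟨k, hk, hRk⟩ := hirr i i
  obtain ⟨k, rfl⟩ := Nat.exists_eq_add_of_lt hk
  rw [pow_succ', mul_apply] at hRk
  obtain ⟨j, -, hj⟩ := exists_ne_zero_of_sum_ne_zero hRk
  exact ⟨j, (hR i j).lt_of_ne (left_ne_zero_of_mul hj).symm⟩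

theorem MatIrred.pos_of_mulVec_eq_smul (hR : ∀ i j, 0 ≤ R i j) (hirr : MatIrred R)
    {v : Fin n → ℝ} (hv : 0 ≤ v) (hv0 : v ≠ 0) {r : ℝ} (hRv : R *ᵥ v = r • v)
    (i : Fin n) : 0 < v i := by
  have hpow (k : ℕ) : R ^ k *ᵥ v = r ^ k • v := by
    induction k with
    | zero => simp
    | succ k ih => rw [pow_succ', ← mulVec_mulVec, ih, mulVec_smul, hRv, smul_smul, pow_succ]
  obtain ⟨j, hj⟩ : ∃ j, v j ≠ 0 := by simpa [funext_iff] using hv0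
  obtain ⟨k, -, hRk⟩ := hirr i j
  refine (hv i).lt_of_ne fun hvi => ?_
  have hsum : ∑ m, (R ^ k) i m * v m = 0 := by
    simpa [mulVec, dotProduct, ← hvi] using congrFun (hpow k) i
  exact mul_ne_zero hRk hj <| (sum_eq_zero_iff_of_nonneg fun m _ =>
    mul_nonneg (pow_apply_nonneg hR k i m) (hv m)).1 hsum j (mem_univ j)

theorem exists_pos_eigenvector_specRad (hn : 0 < n) (hsymm : R.IsSymm) (hR : ∀ i j, 0 ≤ R i j)
    (hirr : MatIrred R) : 0 < specRad R ∧ ∃ v : Fin n → ℝ, (∀ i, 0 < v i) ∧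
      R *ᵥ v = specRad R • v := by
  have : NeZero n := ⟨hn.ne'⟩
  obtain ⟨r, v, hv, hv0, hRv, hbound⟩ := hsymm.exists_nonneg_eigenvector hR
  have hvpos := hirr.pos_of_mulVec_eq_smul hR hv hv0 hRv
  have hr : 0 < r := by
    let i : Fin n := ⟨0, hn⟩
    obtain ⟨j, hj⟩ := hirr.exists_pos hR i
    have h : 0 < (R *ᵥ v) i := (mul_pos hj (hvpos j)).trans_le <| single_le_sum
      (f := fun m => R i m * v m) (fun m _ => mul_nonneg (hR i m) (hv m)) (mem_univ j)
    rw [hRv, Pi.smul_apply, smul_eq_mul] at h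
    exact pos_of_mul_pos_left h (hvpos i).le
  have hspec : specRad R = r := IsGreatest.csSup_eq
    ⟨⟨r, mem_spectrum_iff_exists_mulVec_eq_smul.2 ⟨v, hv0, hRv⟩, abs_of_pos hr⟩,
      by rintro _ ⟨c, hc, rfl⟩; exact abs_le_of_mem_spectrum hR hbound hc⟩
  exact ⟨hspec ▸ hr, v, hvpos, hspec ▸ hRv⟩

end Perron

section MMCAMap

variable {n : ℕ} {R : Matrix (Fin n) (Fin n) ℝ} {β μ : ℝ} {x y : Fin n → ℝ}

/-- The probabilities of the independent events that make node `i` infected at the next step: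
`none` is not recovering, `some j` is being infected by `j`. -/
def infectionChannel (R : Matrix (Fin n) (Fin n) ℝ) (β μ : ℝ) (x : Fin n → ℝ)
    (i : Fin n) : Option (Fin n) → ℝ
  | none => (1 - μ) * x i
  | some j => β * R i j * x j

theorem F_apply_eq_one_sub_prod (i : Fin n) :
    F R β μ x i = 1 - ∏ o, (1 - infectionChannel R β μ x i o) := by
  simp [F, Fintype.prod_option, infectionChannel]

theorem sum_infectionChannel (i : Fin n) :
    ∑ o, infectionChannel R β μ x i o = (1 - μ) * x i + β * (R *ᵥ x) i := by
  simp [Fintype.sum_option, infectionChannel, mulVec, dotProduct, mul_sum, mul_assoc]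

theorem infectionChannel_smul (t : ℝ) (i : Fin n) (o : Option (Fin n)) :
    infectionChannel R β μ (t • x) i o = t * infectionChannel R β μ x i o := by
  cases o <;> simp only [infectionChannel, Pi.smul_apply, smul_eq_mul] <;> ring

theorem infectionChannel_mem_Icc (hR : ∀ i j, R i j ∈ Set.Icc 0 1) (hβ : β ∈ Set.Icc 0 1)
    (hμ : μ ∈ Set.Icc 0 1) (hx : x ∈ Set.Icc 0 1) (i : Fin n) (o : Option (Fin n)) :
    infectionChannel R β μ x i o ∈ Set.Icc 0 1 := by
  have hxi (j : Fin n) : x j ∈ Set.Icc 0 1 := ⟨hx.1 j, hx.2 j⟩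
  have hμ' : 1 - μ ∈ Set.Icc 0 1 := ⟨sub_nonneg.2 hμ.2, sub_le_self _ hμ.1⟩
  cases o with
  | none => exact unitInterval.mul_mem hμ' (hxi i)
  | some j => exact unitInterval.mul_mem (unitInterval.mul_mem hβ (hR i j)) (hxi j)

theorem infectionChannel_mono (hR : ∀ i j, 0 ≤ R i j) (hβ : 0 ≤ β) (hμ : μ ≤ 1)
    (hxy : x ≤ y) (i : Fin n) (o : Option (Fin n)) :
    infectionChannel R β μ x i o ≤ infectionChannel R β μ y i o := by
  cases o with
  | none => exact mul_le_mul_of_nonneg_left (hxy i) (sub_nonneg.2 hμ)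
  | some j => exact mul_le_mul_of_nonneg_left (hxy j) (mul_nonneg hβ (hR i j))

theorem continuous_F : Continuous (F R β μ) :=
  continuous_pi fun i => by unfold F; fun_prop

theorem F_mapsTo (hR : ∀ i j, R i j ∈ Set.Icc 0 1) (hβ : β ∈ Set.Icc 0 1)
    (hμ : μ ∈ Set.Icc 0 1) : Set.MapsTo (F R β μ) (Set.Icc 0 1) (Set.Icc 0 1) := by
  intro x hx
  have h (i : Fin n) := prod_one_sub_mem_Icc (s := univ) fun o _ =>
    infectionChannel_mem_Icc hR hβ hμ hx i o
  exact ⟨fun i => by rw [Pi.zero_apply, F_apply_eq_one_sub_prod]; linarith [(h i).2],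
    fun i => by rw [Pi.one_apply, F_apply_eq_one_sub_prod]; linarith [(h i).1]⟩

theorem F_monotoneOn (hR : ∀ i j, R i j ∈ Set.Icc 0 1) (hβ : β ∈ Set.Icc 0 1)
    (hμ : μ ∈ Set.Icc 0 1) : MonotoneOn (F R β μ) (Set.Icc 0 1) := by
  intro x _ y hy hxy i
  rw [F_apply_eq_one_sub_prod, F_apply_eq_one_sub_prod]
  refine sub_le_sub_left (prod_le_prod (fun o _ => ?_) fun o _ => ?_) 1
  · exact sub_nonneg.2 (infectionChannel_mem_Icc hR hβ hμ hy i o).2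
  · exact sub_le_sub_left (infectionChannel_mono (fun i j => (hR i j).1) hβ.1 hμ.2 hxy i o) 1

theorem infectionChannel_le_F (hR : ∀ i j, R i j ∈ Set.Icc 0 1) (hβ : β ∈ Set.Icc 0 1)
    (hμ : μ ∈ Set.Icc 0 1) (hx : x ∈ Set.Icc 0 1) (i : Fin n) (o : Option (Fin n)) :
    infectionChannel R β μ x i o ≤ F R β μ x i := by
  rw [F_apply_eq_one_sub_prod]
  linarith [prod_one_sub_le_one_sub (fun o _ => infectionChannel_mem_Icc hR hβ hμ hx i o)
    (mem_univ o)]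

theorem sub_sq_le_F (hR : ∀ i j, R i j ∈ Set.Icc 0 1) (hβ : β ∈ Set.Icc 0 1)
    (hμ : μ ∈ Set.Icc 0 1) (hx : x ∈ Set.Icc 0 1) (i : Fin n) :
    (1 - μ) * x i + β * (R *ᵥ x) i - ((1 - μ) * x i + β * (R *ᵥ x) i) ^ 2 ≤
      F R β μ x i := by
  rw [F_apply_eq_one_sub_prod, ← sum_infectionChannel]
  linarith [prod_one_sub_le_one_sub_sum_add_sq (s := univ) fun o _ =>
    infectionChannel_mem_Icc hR hβ hμ hx i o]

theorem mul_F_lt_F_smul (hR : ∀ i j, R i j ∈ Set.Icc 0 1) (hβ : β ∈ Set.Ioo 0 1)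
    (hμ : μ ∈ Set.Ioo 0 1) (hrow : ∀ i, ∃ j, 0 < R i j) {z : Fin n → ℝ}
    (hz : z ∈ Set.Icc 0 1) (hzpos : ∀ i, 0 < z i) {t : ℝ} (ht : t ∈ Set.Ioo 0 1)
    (i : Fin n) : t * F R β μ z i < F R β μ (t • z) i := by
  obtain ⟨j, hj⟩ := hrow i
  rw [F_apply_eq_one_sub_prod, F_apply_eq_one_sub_prod]
  simp_rw [infectionChannel_smul]
  exact mul_one_sub_prod_one_sub_lt (fun o _ => infectionChannel_mem_Icc hR
      (Set.Ioo_subset_Icc_self hβ) (Set.Ioo_subset_Icc_self hμ) hz i o)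
    ht (mem_univ none) (mem_univ (some j)) (Option.some_ne_none j).symm
    (mul_pos (sub_pos.2 hμ.2) (hzpos i)) (mul_pos (mul_pos hβ.1 hj) (hzpos j))

theorem le_F_smul (hR : ∀ i j, R i j ∈ Set.Icc 0 1) (hβ : β ∈ Set.Icc 0 1)
    (hμ : μ ∈ Set.Icc 0 1) {v : Fin n → ℝ} (hv : 0 ≤ v) {r : ℝ}
    (hRv : R *ᵥ v = r • v) {ε : ℝ} (hε : 0 ≤ ε) (hεv : ε • v ∈ Set.Icc 0 1)
    (hsmall : ∀ i, (1 - μ + β * r) ^ 2 * (ε * v i) ≤ β * r - μ) :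
    ε • v ≤ F R β μ (ε • v) := by
  intro i
  have h := sub_sq_le_F hR hβ hμ hεv i
  rw [mulVec_smul, hRv] at h
  simp only [Pi.smul_apply, smul_eq_mul] at h ⊢
  nlinarith [mul_nonneg (mul_nonneg hε (hv i)) (sub_nonneg.2 (hsmall i))]

theorem exists_pos_le_le_F (hR : ∀ i j, R i j ∈ Set.Icc 0 1) (hβ : β ∈ Set.Icc 0 1)
    (hμ : μ ∈ Set.Icc 0 1) {v : Fin n → ℝ} (hv : ∀ i, 0 < v i) {r : ℝ}
    (hRv : R *ᵥ v = r • v) (hr : μ < β * r) {y : Fin n → ℝ} (hypos : ∀ i, 0 < y i)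
    (hy : y ≤ 1) : ∃ x ∈ Set.Icc 0 1, (∀ i, 0 < x i) ∧ x ≤ y ∧ x ≤ F R β μ x := by
  have hσ : 0 < (1 - μ + β * r) ^ 2 := by nlinarith [hμ.2]
  obtain ⟨ε, hε, hεv⟩ := exists_pos_forall_mul_le v (c := fun i => min (y i) ((β * r - μ) /
    (1 - μ + β * r) ^ 2)) fun i => lt_min (hypos i) (div_pos (sub_pos.2 hr) hσ)
  have hxy : ε • v ≤ y := fun i => (hεv i).trans (min_le_left _ _)
  have hx : ε • v ∈ Set.Icc 0 1 := ⟨smul_nonneg hε.le fun i => (hv i).le, hxy.trans hy⟩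
  refine ⟨ε • v, hx, fun i => mul_pos hε (hv i), hxy,
    le_F_smul hR hβ hμ (fun i => (hv i).le) hRv hε.le hx fun i => ?_⟩
  rw [mul_comm, ← le_div_iff₀ hσ]
  exact (hεv i).trans (min_le_right _ _)

theorem F_pos_of_pos (hR : ∀ i j, R i j ∈ Set.Icc 0 1) (hβ : β ∈ Set.Icc 0 1)
    (hμ : μ ∈ Set.Ico 0 1) (hx : x ∈ Set.Icc 0 1) {i : Fin n} (hxi : 0 < x i) :
    0 < F R β μ x i :=
  (mul_pos (sub_pos.2 hμ.2) hxi).trans_le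
    (infectionChannel_le_F hR hβ (Set.Ico_subset_Icc_self hμ) hx i none)

theorem F_pos_of_adj (hR : ∀ i j, R i j ∈ Set.Icc 0 1) (hβ : β ∈ Set.Ioc 0 1)
    (hμ : μ ∈ Set.Icc 0 1) (hx : x ∈ Set.Icc 0 1) {i j : Fin n} (hRij : 0 < R i j)
    (hxj : 0 < x j) : 0 < F R β μ x i :=
  (mul_pos (mul_pos hβ.1 hRij) hxj).trans_le
    (infectionChannel_le_F hR (Set.Ioc_subset_Icc_self hβ) hμ hx i (some j))

theorem iterate_F_pos_of_pos (hR : ∀ i j, R i j ∈ Set.Icc 0 1)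
    (hβ : β ∈ Set.Icc 0 1) (hμ : μ ∈ Set.Ico 0 1) (hx : x ∈ Set.Icc 0 1)
    {i : Fin n} (hxi : 0 < x i) (k : ℕ) : 0 < (F R β μ)^[k] x i := by
  induction k with
  | zero => exact hxi
  | succ k ih =>
    rw [iterate_succ_apply']
    exact F_pos_of_pos hR hβ hμ ((F_mapsTo hR hβ (Set.Ico_subset_Icc_self hμ)).iterate k hx) ih

theorem iterate_F_pos_of_pow_ne_zero (hR : ∀ i j, R i j ∈ Set.Icc 0 1)
    (hβ : β ∈ Set.Ioc 0 1) (hμ : μ ∈ Set.Icc 0 1) (hx : x ∈ Set.Icc 0 1)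
    {k : ℕ} {i j : Fin n} (hRk : (R ^ k) i j ≠ 0) (hxj : 0 < x j) :
    0 < (F R β μ)^[k] x i := by
  induction k generalizing i with
  | zero =>
    obtain rfl : i = j := by_contra fun hij => hRk (one_apply_ne hij)
    exact hxj
  | succ k ih =>
    rw [pow_succ', mul_apply] at hRk
    obtain ⟨m, -, hm⟩ := exists_ne_zero_of_sum_ne_zero hRk
    rw [iterate_succ_apply']
    exact F_pos_of_adj hR hβ hμ ((F_mapsTo hR (Set.Ioc_subset_Icc_self hβ) hμ).iterate k hx)
      ((hR i m).1.lt_of_ne (left_ne_zero_of_mul hm).symm) (ih (right_ne_zero_of_mul hm))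

theorem exists_iterate_F_pos (hR : ∀ i j, R i j ∈ Set.Icc 0 1)
    (hβ : β ∈ Set.Ioo 0 1) (hμ : μ ∈ Set.Ioo 0 1) (hirr : MatIrred R)
    (hx : x ∈ Set.Icc 0 1) (hx0 : x ≠ 0) : ∃ K, ∀ i, 0 < (F R β μ)^[K] x i := by
  obtain ⟨j, hj⟩ : ∃ j, x j ≠ 0 := by simpa [funext_iff] using hx0
  choose k _ hk using fun i => hirr i j
  refine ⟨univ.sup k, fun i => ?_⟩
  obtain ⟨l, hl⟩ := Nat.exists_eq_add_of_le (le_sup (mem_univ i) : k i ≤ univ.sup k)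
  rw [hl, add_comm, iterate_add_apply]
  refine iterate_F_pos_of_pos hR (Set.Ioo_subset_Icc_self hβ) (Set.Ioo_subset_Ico_self hμ)
    ((F_mapsTo hR (Set.Ioo_subset_Icc_self hβ) (Set.Ioo_subset_Icc_self hμ)).iterate _ hx) ?_ l
  exact iterate_F_pos_of_pow_ne_zero hR (Set.Ioo_subset_Ioc_self hβ)
    (Set.Ioo_subset_Icc_self hμ) hx (hk i) ((hx.1 j).lt_of_ne (Ne.symm hj))

end MMCAMap

theorem endemic_global_attractor_general (n : ℕ) (hn : 2 ≤ n) (R : Matrix (Fin n) (Fin n) ℝ)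
    (hsymm : R.IsSymm) (hR : ∀ i j, R i j ∈ Set.Icc (0:ℝ) 1)
    (hirr : MatIrred R)
    (β μ : ℝ) (hβ : β ∈ Set.Ioo (0:ℝ) 1) (hμ : μ ∈ Set.Ioo (0:ℝ) 1)
    (hgt : μ / specRad R < β) :
    ∃ z₀ : Fin n → ℝ,
      (∀ i, z₀ i ∈ Set.Icc (0:ℝ) 1) ∧ z₀ ≠ 0 ∧ F R β μ z₀ = z₀ ∧
      ∀ x : Fin n → ℝ, (∀ i, x i ∈ Set.Icc (0:ℝ) 1) → x ≠ 0 →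
        Tendsto (fun k => (F R β μ)^[k] x) atTop (nhds z₀) := by
  have hn0 : 0 < n := by omega
  have hR0 : ∀ i j, 0 ≤ R i j := fun i j => (hR i j).1
  have hβ' := Set.Ioo_subset_Icc_self hβ
  have hμ' := Set.Ioo_subset_Icc_self hμ
  obtain ⟨hρ, v, hv, hRv⟩ := exists_pos_eigenvector_specRad hn0 hsymm hR0 hirr
  have hμβ : μ < β * specRad R := by rwa [div_lt_iff₀ hρ] at hgt
  obtain ⟨z₀, hz₀, hz₀pos, hz₀fix, hconv⟩ :=
    exists_pos_isFixedPt_tendsto_iterate continuous_F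
      (F_monotoneOn hR hβ' hμ') (F_mapsTo hR hβ' hμ')
      (fun z hz hzpos t ht => mul_F_lt_F_smul hR hβ hμ (hirr.exists_pos hR0) hz hzpos ht)
      (fun y hy hypos => exists_pos_le_le_F hR hβ' hμ' hv hRv hμβ hypos hy.2)
  refine ⟨z₀, fun i => ⟨hz₀.1 i, hz₀.2 i⟩,
    fun h => (hz₀pos ⟨0, hn0⟩).ne' (congrFun h _), hz₀fix, fun x hx hx0 => ?_⟩
  have hx' : x ∈ Set.Icc 0 1 := ⟨fun i => (hx i).1, fun i => (hx i).2⟩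
  obtain ⟨K, hK⟩ := exists_iterate_F_pos hR hβ hμ hirr hx' hx0
  rw [← tendsto_add_atTop_iff_nat K]
  simpa only [iterate_add_apply] using hconv _ ((F_mapsTo hR hβ' hμ').iterate K hx') hK

theorem endemic_global_attractor (n : ℕ) (hn : 2 ≤ n) (R : Matrix (Fin n) (Fin n) ℝ)
    (hsymm : R.IsSymm) (hR : ∀ i j, R i j ∈ Set.Icc (0:ℝ) 1)
    (hdiag : ∀ i, R i i = 0) (hirr : MatIrred R)
    (β μ : ℝ) (hβ : β ∈ Set.Ioo (0:ℝ) 1) (hμ : μ ∈ Set.Ioo (0:ℝ) 1)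
    (hgt : μ / specRad R < β) :
    ∃ z₀ : Fin n → ℝ,
      (∀ i, z₀ i ∈ Set.Icc (0:ℝ) 1) ∧ z₀ ≠ 0 ∧ F R β μ z₀ = z₀ ∧
      ∀ x : Fin n → ℝ, (∀ i, x i ∈ Set.Icc (0:ℝ) 1) → x ≠ 0 →
        Tendsto (fun k => (F R β μ)^[k] x) atTop (nhds z₀) :=
  endemic_global_attractor_general n hn R hsymm hR hirr β μ hβ hμ hgt
end

section
/- Set β = β₀ = μ/ρ(R), and let u ∈ ℝ^n be a nonzero vector with nonnegative entries satisfying R·u = ρ(R)·u. Then the transcritical transversality quantity is strictly negative: ∑_{i=1}^n ∑_{j=1}^n ∑_{k=1}^n u_k u_i u_j · ∂²F_k/∂x_i∂x_j (0) < 0. -/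
open Filter Finset

/-! At `x = 0` the Hessian of `F_k` is
`-((1 - μ) β (r_{ki} δ_{jk} + r_{kj} δ_{ik}) + β² r_{ki} r_{kj} [i ≠ j])`.
Contracted against `u ⊗ u ⊗ u`, the `β²` part contributes a nonpositive amount because `R` and `u`
are nonnegative, while the `(1 - μ) β` part collapses through `R u = ρ u` to
`-2 (1 - μ) β ρ ∑ u_k³ = -2 (1 - μ) μ ∑ u_k³ < 0`.
Irreducibility gives `ρ > 0`, so that `β ρ = μ`. -/

section
variable {ι : Type*} [Fintype ι] [DecidableEq ι]

theorem hasFDerivAt_prod_one_sub_mul (s : Finset ι) (a y : ι → ℝ) :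
    HasFDerivAt (fun z : ι → ℝ => ∏ l ∈ s, (1 - a l * z l))
      (∑ l ∈ s, (∏ m ∈ s.erase l, (1 - a m * y m)) •
        -(a l • ContinuousLinearMap.proj (R := ℝ) (φ := fun _ : ι => ℝ) l)) y :=
  HasFDerivAt.finsetProd fun l _ => ((hasFDerivAt_apply l y).const_mul (a l)).const_sub 1

theorem fderiv_prod_one_sub_mul_apply_single (s : Finset ι) (a y : ι → ℝ) (j : ι) :
    fderiv ℝ (fun z : ι → ℝ => ∏ l ∈ s, (1 - a l * z l)) y (Pi.single j 1) =
      if j ∈ s then -(a j * ∏ m ∈ s.erase j, (1 - a m * y m)) else 0 := by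
  rw [(hasFDerivAt_prod_one_sub_mul s a y).fderiv]
  split_ifs <;> simp_all [Pi.single_apply, mul_comm]

theorem fderiv_one_sub_mul_prod_apply_single (c : ℝ) (a : ι → ℝ) (k j : ι) (y : ι → ℝ) :
    fderiv ℝ (fun z : ι → ℝ => 1 - (1 - c * z k) * ∏ l, (1 - a l * z l)) y (Pi.single j 1) =
      c * (if j = k then 1 else 0) * ∏ l, (1 - a l * y l) +
        (1 - c * y k) * (a j * ∏ l ∈ univ.erase j, (1 - a l * y l)) := by
  have hA := ((hasFDerivAt_apply (𝕜 := ℝ) (F' := fun _ : ι => ℝ) k y).const_mul c).const_sub 1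
  have hP := hasFDerivAt_prod_one_sub_mul univ a y
  have h : HasFDerivAt (fun z : ι → ℝ => 1 - (1 - c * z k) * ∏ l, (1 - a l * z l)) _ y :=
    (hA.mul hP).const_sub 1
  rw [h.fderiv]
  rcases eq_or_ne j k with rfl | hjk
  · simp [Pi.single_apply]; ring
  · simp [Pi.single_apply, hjk, hjk.symm, mul_comm]

theorem fderiv_fderiv_one_sub_mul_prod_apply_single (c : ℝ) (a : ι → ℝ) (k i j : ι) :
    fderiv ℝ (fun y => fderiv ℝ (fun z : ι → ℝ => 1 - (1 - c * z k) * ∏ l, (1 - a l * z l)) y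
      (Pi.single j 1)) 0 (Pi.single i 1) =
      -(c * (a i * (if j = k then 1 else 0) + a j * (if i = k then 1 else 0)) +
        a i * a j * (if i = j then 0 else 1)) := by
  simp only [fderiv_one_sub_mul_prod_apply_single]
  have hA := ((hasFDerivAt_apply (𝕜 := ℝ) (F' := fun _ : ι => ℝ) k 0).const_mul c).const_sub 1
  have hP := hasFDerivAt_prod_one_sub_mul univ a 0
  have hQ := hasFDerivAt_prod_one_sub_mul (univ.erase j) a 0
  have h : HasFDerivAt (fun y : ι → ℝ => c * (if j = k then 1 else 0) * ∏ l, (1 - a l * y l) +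
      (1 - c * y k) * (a j * ∏ l ∈ univ.erase j, (1 - a l * y l))) _ 0 :=
    (hP.const_mul _).add (hA.mul (hQ.const_mul (a j)))
  rw [h.fderiv]
  by_cases hjk : j = k <;> by_cases hik : i = k <;> by_cases hij : i = j <;> subst_vars <;>
    simp_all [Pi.single_apply, eq_comm] <;> ring

end

theorem sum_mul_eq_of_mulVec_eq_smul {ι : Type*} [Fintype ι] {R : Matrix ι ι ℝ} {u : ι → ℝ}
    {c : ℝ} (hev : R.mulVec u = c • u) (i : ι) : ∑ j, R i j * u j = c * u i := by
  simpa [Matrix.mulVec, dotProduct] using congrFun hev i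

theorem MatIrred.pos_of_mulVec_eq_smul_s17 {n : ℕ} {R : Matrix (Fin n) (Fin n) ℝ}
    (hirr : MatIrred R) (hR : ∀ i j, 0 ≤ R i j) {u : Fin n → ℝ} (hu0 : u ≠ 0)
    (hu : ∀ i, 0 ≤ u i) {c : ℝ} (hev : R.mulVec u = c • u) : 0 < c := by
  obtain ⟨k₀, hk₀⟩ := Function.ne_iff.mp hu0
  have hk₀ : 0 < u k₀ := (hu k₀).lt_of_ne' hk₀
  have hRu := sum_mul_eq_of_mulVec_eq_smul hev
  have hc : 0 ≤ c := nonneg_of_mul_nonneg_left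
    (hRu k₀ ▸ sum_nonneg fun j _ => mul_nonneg (hR k₀ j) (hu j)) hk₀
  refine hc.lt_of_ne fun hc0 => ?_
  -- `c = 0` kills column `k₀` of `R`, hence of every positive power of `R`
  have hcol : ∀ l, R l k₀ = 0 := fun l => by
    have hsum : ∑ j, R l j * u j = 0 := by simpa [← hc0] using hRu l
    have := (sum_eq_zero_iff_of_nonneg fun j _ => mul_nonneg (hR l j) (hu j)).mp hsum k₀
      (mem_univ _)
    exact (mul_eq_zero.mp this).resolve_right hk₀.ne'
  obtain ⟨m, hm, hne⟩ := hirr k₀ k₀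
  obtain ⟨m, rfl⟩ := Nat.exists_eq_add_of_lt hm
  refine hne ?_
  rw [zero_add, pow_succ, Matrix.mul_apply]
  exact sum_eq_zero fun l _ => by rw [hcol l, mul_zero]

theorem sum_triple_kronecker_eq_of_mulVec_eq_smul {ι : Type*} [Fintype ι] [DecidableEq ι]
    (R : Matrix ι ι ℝ) {u : ι → ℝ} {c : ℝ} (hev : R.mulVec u = c • u) :
    ∑ i, ∑ j, ∑ k, u k * u i * u j *
      (R k i * (if j = k then 1 else 0) + R k j * (if i = k then 1 else 0)) =
      2 * c * ∑ k, u k ^ 3 := by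
  have hRu := sum_mul_eq_of_mulVec_eq_smul hev
  have hrow : ∀ k, ∑ i, u k * u k * (R k i * u i) = c * u k ^ 3 := fun k => by
    rw [← mul_sum, hRu]; ring
  calc _ = ∑ i, ∑ j, (u j * u j * (R j i * u i) + u i * u i * (R i j * u j)) := by
        refine sum_congr rfl fun i _ => sum_congr rfl fun j _ => ?_
        simp only [mul_add, sum_add_distrib, ← mul_assoc, sum_mul_boole, mem_univ, if_true]
        ring
    _ = 2 * c * ∑ k, u k ^ 3 := by
        simp only [sum_add_distrib]
        rw [sum_comm]
        simp only [hrow, ← mul_sum]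
        ring

theorem fderiv_fderiv_F_apply_single {n : ℕ} (R : Matrix (Fin n) (Fin n) ℝ) (β μ : ℝ)
    (k i j : Fin n) :
    fderiv ℝ (fun y => fderiv ℝ (fun z => F R β μ z k) y (Pi.single j 1)) 0 (Pi.single i 1) =
      -((1 - μ) * (β * R k i * (if j = k then 1 else 0) + β * R k j * (if i = k then 1 else 0)) +
        β * R k i * (β * R k j) * (if i = j then 0 else 1)) :=
  fderiv_fderiv_one_sub_mul_prod_apply_single (1 - μ) (fun l => β * R k l) k i j

theorem transversality_negative_general (n : ℕ) (R : Matrix (Fin n) (Fin n) ℝ)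
    (hR : ∀ i j, R i j ∈ Set.Icc (0:ℝ) 1)
    (hirr : MatIrred R)
    (μ : ℝ) (hμ : μ ∈ Set.Ioo (0:ℝ) 1)
    (u : Fin n → ℝ) (hu0 : u ≠ 0) (hupos : ∀ i, 0 ≤ u i)
    (hev : R.mulVec u = specRad R • u) :
    ∑ i, ∑ j, ∑ k, u k * u i * u j *
      fderiv ℝ
        (fun y => fderiv ℝ (fun z => F R (μ / specRad R) μ z k) y (Pi.single j 1))
        0 (Pi.single i 1) < 0 := by
  set β := μ / specRad R
  have hRnonneg : ∀ i j, 0 ≤ R i j := fun i j => (hR i j).1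
  have hβ : β * specRad R = μ :=
    div_mul_cancel₀ μ (hirr.pos_of_mulVec_eq_smul_s17 hRnonneg hu0 hupos hev).ne'
  have hcube : 0 < ∑ k, u k ^ 3 := by
    obtain ⟨k₀, hk₀⟩ := Function.ne_iff.mp hu0
    exact sum_pos' (fun k _ => pow_nonneg (hupos k) 3)
      ⟨k₀, mem_univ _, pow_pos ((hupos k₀).lt_of_ne' hk₀) 3⟩
  simp only [fderiv_fderiv_F_apply_single]
  calc _ ≤ ∑ i, ∑ j, ∑ k, -((1 - μ) * β) * (u k * u i * u j *
          (R k i * (if j = k then 1 else 0) + R k j * (if i = k then 1 else 0))) := by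
        refine sum_le_sum fun i _ => sum_le_sum fun j _ => sum_le_sum fun k _ => ?_
        have hcross : 0 ≤ u k * u i * u j * R k i * R k j * β ^ 2 * (if i = j then 0 else 1) :=
          mul_nonneg (mul_nonneg (mul_nonneg (mul_nonneg (mul_nonneg (mul_nonneg (hupos k)
            (hupos i)) (hupos j)) (hRnonneg k i)) (hRnonneg k j)) (sq_nonneg β))
            (by split_ifs <;> norm_num)
        linear_combination hcross
    _ = -(2 * (1 - μ) * μ * ∑ k, u k ^ 3) := by
        simp only [← mul_sum, sum_triple_kronecker_eq_of_mulVec_eq_smul R hev, ← hβ]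
        ring
    _ < 0 := neg_neg_of_pos <| mul_pos (mul_pos (mul_pos two_pos (sub_pos.2 hμ.2)) hμ.1) hcube

theorem transversality_negative (n : ℕ) (hn : 2 ≤ n) (R : Matrix (Fin n) (Fin n) ℝ)
    (hsymm : R.IsSymm) (hR : ∀ i j, R i j ∈ Set.Icc (0:ℝ) 1)
    (hdiag : ∀ i, R i i = 0) (hirr : MatIrred R)
    (μ : ℝ) (hμ : μ ∈ Set.Ioo (0:ℝ) 1)
    (u : Fin n → ℝ) (hu0 : u ≠ 0) (hupos : ∀ i, 0 ≤ u i)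
    (hev : R.mulVec u = specRad R • u) :
    ∑ i, ∑ j, ∑ k, u k * u i * u j *
      fderiv ℝ
        (fun y => fderiv ℝ (fun z => F R (μ / specRad R) μ z k) y (Pi.single j 1))
        0 (Pi.single i 1) < 0 :=
  transversality_negative_general n R hR hirr μ hμ u hu0 hupos hev
end
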